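/- arXiv:0803.3303 — 5 statements merged into one kernel-verified Lean document; each statement's English description precedes it below -/
import Mathlib

section
/- Let X be a quasimartingale with conditional variation Var_X(t) = sup over simple previsible |ξ| ≤ 1 of E[∫_0^t ξ dX], and set C(t,x) = E[(X_t - x)_+]. Then for s ≤ t and all x, C(t,x) ≥ C(s,x) - (Var_X(t) - Var_X(s)); in particular t ↦ C(t,x) + Var_X(t) is nondecreasing. -/
open MeasureTheory Filter Set Function Topology

noncomputable section

namespace GBE

variable {Ω : Type*} {m0 : MeasurableSpace Ω}

/-- A real-valued path is càdlàg: right-continuous with left limits everywhere. -/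
def CadlagOn (f : ℝ → ℝ) : Prop :=
  (∀ t : ℝ, ContinuousWithinAt f (Ici t) t) ∧
  (∀ t : ℝ, ∃ l : ℝ, Tendsto f (nhdsWithin t (Iio t)) (nhds l))

/-- A process is càdlàg if every path is càdlàg. -/
def Cadlag (X : ℝ → Ω → ℝ) : Prop := ∀ ω, CadlagOn (fun t => X t ω)

/-- The jump of a path at a time `t`. -/
def jump (f : ℝ → ℝ) (t : ℝ) : ℝ := f t - Function.leftLim f t

/-- A local martingale: there is a localizing sequence of stopping times increasing
to infinity such that the stopped processes are martingales. -/
def IsLocalMartingale (μ : Measure Ω) (ℱ : Filtration ℝ m0) (M : ℝ → Ω → ℝ) : Prop :=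
  ∃ τ : ℕ → Ω → ℝ,
    (∀ n, IsStoppingTime ℱ (fun ω => ((τ n ω : ℝ) : WithTop ℝ))) ∧
    (∀ n ω, 0 ≤ τ n ω) ∧
    (∀ ω, Tendsto (fun n => τ n ω) atTop atTop) ∧
    ∀ n, Martingale (fun t ω => M (min t (τ n ω)) ω) ℱ μ

/-- The previsible (predictable) σ-algebra on `ℝ × Ω`, generated by sets
`(s,∞) × A` with `A ∈ ℱ s` and `(-∞,0] × A` with `A ∈ ℱ 0`. -/
def predictableSigma (ℱ : Filtration ℝ m0) : MeasurableSpace (ℝ × Ω) :=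
  MeasurableSpace.generateFrom
    ({p | ∃ (s : ℝ) (A : Set Ω), MeasurableSet[ℱ s] A ∧ p = (Set.Ioi s) ×ˢ A} ∪
     {p | ∃ A : Set Ω, MeasurableSet[ℱ 0] A ∧ p = (Set.Iic (0:ℝ)) ×ˢ A})

/-- A previsible process. -/
def Previsible (ℱ : Filtration ℝ m0) (A : ℝ → Ω → ℝ) : Prop :=
  @Measurable (ℝ × Ω) ℝ (predictableSigma ℱ) _ (fun p : ℝ × Ω => A p.1 p.2)

/-- Locally finite variation: finite variation on each interval `[0,T]`, pathwise. -/
def LocFV (A : ℝ → Ω → ℝ) : Prop :=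
  ∀ ω, ∀ T : ℝ, eVariationOn (fun t => A t ω) (Icc 0 T) < ⊤

/-- A (stochastic) partition: an increasing sequence of stopping times starting at 0
and tending to infinity. -/
def IsPartition (ℱ : Filtration ℝ m0) (τ : ℕ → Ω → ℝ) : Prop :=
  (∀ ω, τ 0 ω = 0) ∧ (∀ n ω, τ n ω ≤ τ (n+1) ω) ∧
  (∀ ω, Tendsto (fun n => τ n ω) atTop atTop) ∧
  (∀ n, IsStoppingTime ℱ (fun ω => ((τ n ω : ℝ) : WithTop ℝ)))

/-- The mesh of a sequence of partitions tends to zero. -/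
def MeshTendstoZero (P : ℕ → ℕ → Ω → ℝ) : Prop :=
  ∀ ε > (0:ℝ), ∃ N, ∀ n ≥ N, ∀ k ω, P n (k+1) ω - P n k ω ≤ ε

/-- Approximation to the quadratic covariation of `X` and `Y` along a partition. -/
def covApprox (τ : ℕ → Ω → ℝ) (X Y : ℝ → Ω → ℝ) (t : ℝ) (ω : Ω) : ℝ :=
  ∑' k : ℕ, (X (min (τ (k+1) ω) t) ω - X (min (τ k ω) t) ω) *
            (Y (min (τ (k+1) ω) t) ω - Y (min (τ k ω) t) ω)

/-- Convergence uniformly on compacts in probability (ucp). -/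
def TendstoUcp (μ : Measure Ω) (F : ℕ → ℝ → Ω → ℝ) (G : ℝ → Ω → ℝ) : Prop :=
  ∀ T > (0:ℝ), ∀ ε > (0:ℝ),
    Tendsto (fun n => μ {ω | ∃ t ∈ Icc (0:ℝ) T, ε ≤ |F n t ω - G t ω|}) atTop (nhds 0)

/-- `Q` is the quadratic covariation `[X,Y]`: the ucp limit of the partition
approximations as the mesh tends to zero. -/
def HasCovariation (μ : Measure Ω) (ℱ : Filtration ℝ m0) (X Y Q : ℝ → Ω → ℝ) : Prop :=
  ∀ P : ℕ → ℕ → Ω → ℝ, (∀ n, IsPartition ℱ (P n)) → MeshTendstoZero P →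
    TendstoUcp μ (fun n t ω => covApprox (P n) X Y t ω) Q

/-- `Q` is the quadratic variation `[X]`. -/
def HasQV (μ : Measure Ω) (ℱ : Filtration ℝ m0) (X Q : ℝ → Ω → ℝ) : Prop :=
  HasCovariation μ ℱ X X Q

/-- The sum of products of jumps `Σ_{s ≤ t} ΔX_s ΔY_s`. -/
def jumpCov (X Y : ℝ → Ω → ℝ) (t : ℝ) (ω : Ω) : ℝ :=
  ∑' s : Ioc (0:ℝ) t, jump (fun u => X u ω) s * jump (fun u => Y u ω) s

/-- A zero continuous quadratic variation (z.c.q.v.) process: càdlàg, adapted, whose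
quadratic variation exists and equals the sum of squared jumps. -/
def Zcqv (μ : Measure Ω) (ℱ : Filtration ℝ m0) (V : ℝ → Ω → ℝ) : Prop :=
  Cadlag V ∧ Adapted ℱ V ∧ HasQV μ ℱ V (jumpCov V V)

/-- A semimartingale: a càdlàg adapted process decomposing as a local martingale plus
a càdlàg adapted process of locally finite variation. -/
def IsSemimartingale (μ : Measure Ω) (ℱ : Filtration ℝ m0) (X : ℝ → Ω → ℝ) : Prop :=
  Cadlag X ∧ Adapted ℱ X ∧
  ∃ M A, IsLocalMartingale μ ℱ M ∧ Cadlag A ∧ Adapted ℱ A ∧ LocFV A ∧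
    ∀ t ω, X t ω = M t ω + A t ω

/-- A Dirichlet process: the sum of a local martingale and a z.c.q.v. process. -/
def IsDirichlet (μ : Measure Ω) (ℱ : Filtration ℝ m0) (X : ℝ → Ω → ℝ) : Prop :=
  Cadlag X ∧ Adapted ℱ X ∧
  ∃ M V, IsLocalMartingale μ ℱ M ∧ Zcqv μ ℱ V ∧ ∀ t ω, X t ω = M t ω + V t ω

/-- `I` is the stochastic integral `∫ H_{s-} dX_s` of the left limits of the càdlàg
process `H` with respect to `X`: the ucp limit of left-point Riemann sums. -/
def IsStochIntegral (μ : Measure Ω) (ℱ : Filtration ℝ m0) (H X I : ℝ → Ω → ℝ) : Prop :=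
  ∀ P : ℕ → ℕ → Ω → ℝ, (∀ n, IsPartition ℱ (P n)) → MeshTendstoZero P →
    TendstoUcp μ (fun n t ω =>
      ∑' k : ℕ, H (min (P n k ω) t) ω *
        (X (min (P n (k+1) ω) t) ω - X (min (P n k ω) t) ω)) I

/-- Class (DL): for each `t`, the stopped values `X_{τ ∧ t}` over all stopping times
`τ` are uniformly integrable. -/
def ClassDL (μ : Measure Ω) (ℱ : Filtration ℝ m0) (X : ℝ → Ω → ℝ) : Prop :=
  ∀ t : ℝ, UniformIntegrable
    (fun (τ : {τ : Ω → ℝ // IsStoppingTime ℱ (fun ω => ((τ ω : ℝ) : WithTop ℝ)) ∧ ∀ ω, 0 ≤ τ ω}) ω => X (min (τ.1 ω) t) ω) 1 μ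

/-- The set of values `E[∫_0^t ξ dX]` over simple previsible `|ξ| ≤ 1`. -/
def simpleVals (μ : Measure Ω) (ℱ : Filtration ℝ m0) (X : ℝ → Ω → ℝ) (t : ℝ) : Set ℝ :=
  {v | ∃ (n : ℕ) (τ : Fin (n+1) → ℝ) (ξ : Fin n → Ω → ℝ),
    Monotone τ ∧ (∀ i, 0 ≤ τ i ∧ τ i ≤ t) ∧
    (∀ i : Fin n, @Measurable Ω ℝ (ℱ (τ i.castSucc)) _ (ξ i) ∧ ∀ ω, |ξ i ω| ≤ 1) ∧
    v = ∫ ω, (∑ i : Fin n, ξ i ω * (X (τ i.succ) ω - X (τ i.castSucc) ω)) ∂μ}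

/-- The conditional variation `Var_X(t)`. -/
def condVar (μ : Measure Ω) (ℱ : Filtration ℝ m0) (X : ℝ → Ω → ℝ) (t : ℝ) : ℝ :=
  sSup (simpleVals μ ℱ X t)

/-- A quasimartingale: càdlàg, adapted, integrable, with finite conditional variation
on every finite interval. -/
def IsQuasimartingale (μ : Measure Ω) (ℱ : Filtration ℝ m0) (X : ℝ → Ω → ℝ) : Prop :=
  Cadlag X ∧ Adapted ℱ X ∧ (∀ t, Integrable (X t) μ) ∧
  ∀ t, BddAbove (simpleVals μ ℱ X t)

/-- The natural filtration σ-algebra `ℱ^X_t = σ(X_s : 0 ≤ s ≤ t)`. -/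
def natSigma (X : ℝ → Ω → ℝ) (t : ℝ) : MeasurableSpace Ω :=
  ⨆ (s : ℝ) (_ : s ∈ Icc (0:ℝ) t), MeasurableSpace.comap (X s) inferInstance

/-- The time-reversed σ-algebra `G^X_s = σ(X_u : u ≥ s)`. -/
def revSigma (X : ℝ → Ω → ℝ) (s : ℝ) : MeasurableSpace Ω :=
  ⨆ (u : ℝ) (_ : s ≤ u), MeasurableSpace.comap (X u) inferInstance

/-- The Markov property of `X`, stated via conditional expectations of indicators. -/
def IsMarkov (μ : Measure Ω) (X : ℝ → Ω → ℝ) : Prop :=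
  ∀ (s t : ℝ), s ≤ t → ∀ (B : Set ℝ), MeasurableSet B →
    μ[((X t) ⁻¹' B).indicator (fun _ => (1:ℝ)) | natSigma X s]
      =ᵐ[μ] μ[((X t) ⁻¹' B).indicator (fun _ => (1:ℝ)) | MeasurableSpace.comap (X s) inferInstance]

/-- A previsible (announceable) stopping time. -/
def IsPredictableTime (ℱ : Filtration ℝ m0) (τ : Ω → ℝ) : Prop :=
  ∃ τn : ℕ → Ω → ℝ, (∀ n, IsStoppingTime ℱ (fun ω => ((τn n ω : ℝ) : WithTop ℝ))) ∧ (∀ n ω, τn n ω ≤ τn (n+1) ω) ∧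
    (∀ ω, Tendsto (fun n => τn n ω) atTop (nhds (τ ω))) ∧ (∀ n ω, 0 < τ ω → τn n ω < τ ω)

/-- Quasi-left-continuity: `X` does not jump at previsible times. -/
def QuasiLeftContinuous (μ : Measure Ω) (ℱ : Filtration ℝ m0) (X : ℝ → Ω → ℝ) : Prop :=
  ∀ τ : Ω → ℝ, IsPredictableTime ℱ τ → IsStoppingTime ℱ (fun ω => ((τ ω : ℝ) : WithTop ℝ)) → (∀ ω, 0 < τ ω) →
    ∀ᵐ ω ∂μ, Function.leftLim (fun t => X t ω) (τ ω) = X (τ ω) ω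

end GBE
open GBE MeasureTheory Set

/-! Since `y ↦ (y - x)⁺` is convex with subgradient `ξ = 1_{X_s > x}` at `X_s`,
`(X_t - x)⁺ ≥ (X_s - x)⁺ + ξ (X_t - X_s)`. As `ξ` is `ℱ_s`-measurable, appending the step `-ξ`
on `(s, t]` to any simple strategy on `[0, s]` shows `Var_X(s) - E[ξ (X_t - X_s)] ≤ Var_X(t)`;
taking expectations in the first inequality gives the claim. -/

namespace GBE

variable {Ω : Type*} {m0 : MeasurableSpace Ω} {μ : Measure Ω} {ℱ : Filtration ℝ m0}
  {X : ℝ → Ω → ℝ}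

lemma monotone_snoc {n : ℕ} {f : Fin (n + 1) → ℝ} (hf : Monotone f) {a : ℝ}
    (ha : f (Fin.last n) ≤ a) : Monotone (Fin.snoc f a : Fin (n + 2) → ℝ) := by
  simpa [Fin.insertNth_last'] using Fin.insertNth_last_monotone hf a ha

lemma integrable_mul_sub (hint : ∀ t, Integrable (X t) μ) {r : ℝ} {η : Ω → ℝ}
    (hη : Measurable[ℱ r] η) (hη_le : ∀ ω, |η ω| ≤ 1) (u v : ℝ) :
    Integrable (fun ω => η ω * (X u ω - X v ω)) μ :=
  ((hint u).sub (hint v)).bdd_mul (c := 1) (hη.mono (ℱ.le r) le_rfl).aestronglyMeasurable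
    (ae_of_all _ fun ω => by simpa using hη_le ω)

lemma add_integral_mem_simpleVals (hint : ∀ t, Integrable (X t) μ)
    {s t : ℝ} (hs : 0 ≤ s) (hst : s ≤ t)
    {η : Ω → ℝ} (hη : Measurable[ℱ s] η) (hη_le : ∀ ω, |η ω| ≤ 1)
    {v : ℝ} (hv : v ∈ simpleVals μ ℱ X s) :
    v + ∫ ω, η ω * (X t ω - X s ω) ∂μ ∈ simpleVals μ ℱ X t := by
  obtain ⟨n, τ, ξ, hτ, hτ_mem, hξ, rfl⟩ := hv
  have hτ_mem' : ∀ i, 0 ≤ τ i ∧ τ i ≤ t := fun i => ⟨(hτ_mem i).1, (hτ_mem i).2.trans hst⟩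
  -- the step `(τ_n, s]` with integrand `0` pads the partition up to `s`
  refine ⟨n + 2, Fin.snoc (Fin.snoc τ s) t, Fin.snoc (Fin.snoc ξ 0) η,
    monotone_snoc (monotone_snoc hτ (hτ_mem _).2) (by simpa using hst), ?_, ?_, ?_⟩
  · simp [Fin.forall_fin_succ', hτ_mem', hs, hst, hs.trans hst]
  · simp only [Fin.forall_fin_succ', Fin.snoc_castSucc, Fin.snoc_last]
    refine ⟨⟨fun i => ?_, ?_, by simp⟩, ?_, hη_le⟩
    · rw [Fin.snoc_castSucc, Fin.snoc_castSucc]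
      exact hξ i
    · exact @measurable_zero _ _ _ (_) _
    · rwa [Fin.snoc_castSucc, Fin.snoc_last]
  · have hsum : ∀ ω, ∑ i : Fin (n + 2), Fin.snoc (α := fun _ => Ω → ℝ) (Fin.snoc ξ 0) η i ω *
          (X (Fin.snoc (α := fun _ => ℝ) (Fin.snoc τ s) t i.succ) ω -
            X (Fin.snoc (α := fun _ => ℝ) (Fin.snoc τ s) t i.castSucc) ω) =
        ∑ i : Fin n, ξ i ω * (X (τ i.succ) ω - X (τ i.castSucc) ω) + η ω * (X t ω - X s ω) := by
      intro ω
      simp [Fin.sum_univ_castSucc, -Fin.castSucc_succ, Fin.succ_castSucc]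
    simp_rw [hsum]
    exact (integral_add
      (integrable_finsetSum _ fun i _ => integrable_mul_sub hint (hξ i).1 (hξ i).2 _ _)
      (integrable_mul_sub hint hη hη_le t s)).symm

lemma condVar_add_integral_le (hint : ∀ t, Integrable (X t) μ)
    {s t : ℝ} (hs : 0 ≤ s) (hst : s ≤ t) (hbdd : BddAbove (simpleVals μ ℱ X t))
    {η : Ω → ℝ} (hη : Measurable[ℱ s] η) (hη_le : ∀ ω, |η ω| ≤ 1) :
    condVar μ ℱ X s + ∫ ω, η ω * (X t ω - X s ω) ∂μ ≤ condVar μ ℱ X t := by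
  have hne : (simpleVals μ ℱ X s).Nonempty :=
    ⟨0, 0, fun _ => 0, Fin.elim0, monotone_const, fun _ => ⟨le_rfl, hs⟩, fun i => i.elim0, by simp⟩
  rw [← le_sub_iff_add_le]
  exact csSup_le hne fun v hv =>
    le_sub_iff_add_le.2 (le_csSup hbdd (add_integral_mem_simpleVals hint hs hst hη hη_le hv))

lemma max_sub_add_ite_mul_le (x a b : ℝ) :
    max (a - x) 0 + (if x < a then 1 else 0) * (b - a) ≤ max (b - x) 0 := by
  split_ifs with h
  · simp only [max_eq_left (sub_nonneg.2 h.le), one_mul]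
    linarith [le_max_left (b - x) 0]
  · simp only [max_eq_right (sub_nonpos.2 (not_lt.1 h)), zero_mul, add_zero]
    exact le_max_right _ _

lemma integral_max_sub_le_add_condVar [IsFiniteMeasure μ] (hadp : Adapted ℱ X)
    (hint : ∀ t, Integrable (X t) μ) {s t : ℝ} (hs : 0 ≤ s) (hst : s ≤ t)
    (hbdd : BddAbove (simpleVals μ ℱ X t)) (x : ℝ) :
    ∫ ω, max (X s ω - x) 0 ∂μ ≤
      ∫ ω, max (X t ω - x) 0 ∂μ + (condVar μ ℱ X t - condVar μ ℱ X s) := by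
  set ξ : Ω → ℝ := fun ω => if x < X s ω then 1 else 0
  have hξ : Measurable[ℱ s] ξ :=
    Measurable.ite (hadp s measurableSet_Ioi) measurable_const measurable_const
  have hξ_le : ∀ ω, |ξ ω| ≤ 1 := fun ω => by by_cases h : x < X s ω <;> simp [ξ, h]
  have hvar := condVar_add_integral_le hint hs hst hbdd hξ.neg (by simpa using hξ_le)
  simp_rw [Pi.neg_apply, neg_mul, integral_neg] at hvar
  have hpos : ∀ r, Integrable (fun ω => max (X r ω - x) 0) μ := fun r =>
    ((hint r).sub (integrable_const x)).pos_part
  have hconv : ∫ ω, max (X s ω - x) 0 ∂μ + ∫ ω, ξ ω * (X t ω - X s ω) ∂μ ≤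
      ∫ ω, max (X t ω - x) 0 ∂μ := by
    rw [← integral_add (hpos s) (integrable_mul_sub hint hξ hξ_le t s)]
    exact integral_mono ((hpos s).add (integrable_mul_sub hint hξ hξ_le t s)) (hpos t)
      fun ω => max_sub_add_ite_mul_le x (X s ω) (X t ω)
  linarith

end GBE

/-- for a quasimartingale `X`, `C(t,x) ≥ C(s,x) − (Var_X(t) − Var_X(s))`
for `s ≤ t`; in particular `t ↦ C(t,x) + Var_X(t)` is nondecreasing. -/
theorem stmt2 {Ω : Type*} {m0 : MeasurableSpace Ω} (μ : Measure Ω) [IsProbabilityMeasure μ]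
    (ℱ : Filtration ℝ m0) (X : ℝ → Ω → ℝ)
    (hqm : IsQuasimartingale μ ℱ X)
    (C : ℝ → ℝ → ℝ) (hC : ∀ t x, C t x = ∫ ω, max (X t ω - x) 0 ∂μ) :
    (∀ s t : ℝ, 0 ≤ s → s ≤ t → ∀ x : ℝ,
      C s x - (condVar μ ℱ X t - condVar μ ℱ X s) ≤ C t x) ∧
    ∀ x : ℝ, MonotoneOn (fun t => C t x + condVar μ ℱ X t) (Ici (0:ℝ)) := by
  obtain ⟨-, hadp, hint, hbdd⟩ := hqm
  have key : ∀ s t : ℝ, 0 ≤ s → s ≤ t → ∀ x : ℝ,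
      C s x - (condVar μ ℱ X t - condVar μ ℱ X s) ≤ C t x := fun s t hs hst x => by
    rw [hC, hC]
    linarith [integral_max_sub_le_add_condVar hadp hint hs hst (hbdd t) x]
  exact ⟨key, fun x s hs t _ hst => by linarith [key s t hs hst x]⟩
end
end

section
/- Let X be a quasimartingale of class (DL) with C(t,x) = E[(X_t - x)_+]. Then for any K_0 < K_1 and T > 0, the total variation of t ↦ C(t,x) on [0,T], integrated in x over [K_0, K_1], is finite; specifically ∫_{K_0}^{K_1} ∫_0^T |d_t C(t,x)| dx ≤ ∫_{K_0}^{K_1} (C(T,x) + 2 Var_X(T)) dx < ∞. -/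
open MeasureTheory Filter Set Function Topology

noncomputable section

open GBE MeasureTheory Set
/-
The convexity of `y ↦ (y - x)⁺` gives `C(b,x) - C(a,x) ≥ E[1_{X_a > x} (X_b - X_a)]`. On a step where
`C(·,x)` decreases, selling the previsible amount `1_{X_a > x}` is an admissible simple integrand
whose expected gain dominates the decrease, so the total decrease of `C(·,x)` along any partition of
`[0,T]` is at most `Var_X(T)`. Since `C ≥ 0`, the total variation is then at most `C(T,x) + 2 Var_X(T)`,
and this bound is antitone in `x`, hence integrable over `[K₀,K₁]`.
-/

/-- The subgradient inequality for the convex function `y ↦ (y - x)⁺` at `a`. -/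
lemma ite_lt_mul_sub_le_max_sub_max (x a b : ℝ) :
    (if x < a then (1 : ℝ) else 0) * (b - a) ≤ max (b - x) 0 - max (a - x) 0 := by
  split_ifs with h
  · have := le_max_left (b - x) 0
    rw [max_eq_left (by linarith : (0 : ℝ) ≤ a - x)]
    linarith
  · have := le_max_right (b - x) 0
    rw [max_eq_right (by linarith : a - x ≤ 0)]
    linarith

lemma abs_sub_eq_sub_add_two_mul_max (a b : ℝ) : |b - a| = (b - a) + 2 * max (a - b) 0 := by
  cases abs_cases (b - a) <;> cases max_cases (a - b) 0 <;> linarith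

lemma eVariationOn_le_of_sum_max_sub_le {α : Type*} [LinearOrder α] {f : α → ℝ} {s : Set α}
    {b : α} {V : ℝ} (hb : IsGreatest s b) (hf : ∀ t ∈ s, 0 ≤ f t)
    (hV : ∀ (m : ℕ) (w : ℕ → α), Monotone w → (∀ i, w i ∈ s) →
      ∑ i ∈ Finset.range m, max (f (w i) - f (w (i + 1))) 0 ≤ V) :
    eVariationOn f s ≤ ENNReal.ofReal (f b + 2 * V) := by
  refine iSup_le fun ⟨n, u, hu, hus⟩ => ?_
  -- extend the partition `u` by the right endpoint `b`
  set w : ℕ → α := fun i => if i ≤ n then u i else b with hw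
  have hw_mono : Monotone w := by
    refine monotone_nat_of_le_succ fun i => ?_
    by_cases h : i + 1 ≤ n
    · simpa [hw, h, Nat.le_of_succ_le h] using hu i.le_succ
    · by_cases h' : i ≤ n
      · simpa [hw, h, h'] using hb.2 (hus i)
      · simp [hw, h, h']
  have hw_mem : ∀ i, w i ∈ s := fun i => by
    by_cases h : i ≤ n
    · simpa [hw, h] using hus i
    · simpa [hw, h] using hb.1
  have hsum : ∑ i ∈ Finset.range n, |f (u (i + 1)) - f (u i)| ≤ f b + 2 * V := calc
    ∑ i ∈ Finset.range n, |f (u (i + 1)) - f (u i)|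
        = ∑ i ∈ Finset.range n, |f (w (i + 1)) - f (w i)| := by
          refine Finset.sum_congr rfl fun i hi => ?_
          have hi : i < n := Finset.mem_range.1 hi
          simp [hw, hi.le, Nat.succ_le_of_lt hi]
    _ ≤ ∑ i ∈ Finset.range (n + 1), |f (w (i + 1)) - f (w i)| :=
          Finset.sum_le_sum_of_subset_of_nonneg (Finset.range_subset_range.2 n.le_succ)
            fun i _ _ => abs_nonneg _
    _ = f (w (n + 1)) - f (w 0)
          + 2 * ∑ i ∈ Finset.range (n + 1), max (f (w i) - f (w (i + 1))) 0 := by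
          simp only [abs_sub_eq_sub_add_two_mul_max, Finset.sum_add_distrib,
            Finset.sum_range_sub (fun i => f (w i)), Finset.mul_sum]
    _ ≤ f b + 2 * V := by
          have hwb : w (n + 1) = b := by simp [hw]
          rw [hwb]
          linarith [hf _ (hw_mem 0), hV (n + 1) w hw_mono hw_mem]
  calc ∑ i ∈ Finset.range n, edist (f (u (i + 1))) (f (u i))
      = ENNReal.ofReal (∑ i ∈ Finset.range n, |f (u (i + 1)) - f (u i)|) := by
        rw [ENNReal.ofReal_sum_of_nonneg fun i _ => abs_nonneg _]
        simp only [edist_dist, Real.dist_eq]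
    _ ≤ ENNReal.ofReal (f b + 2 * V) := ENNReal.ofReal_le_ofReal hsum

lemma lintegral_Icc_ofReal_eq_intervalIntegral {g : ℝ → ℝ} {a b : ℝ} (hab : a ≤ b)
    (hg : IntegrableOn g (Icc a b)) (hg0 : 0 ≤ᵐ[volume.restrict (Icc a b)] g) :
    ∫⁻ x in Icc a b, ENNReal.ofReal (g x) = ENNReal.ofReal (∫ x in a..b, g x) := by
  rw [intervalIntegral.integral_of_le hab, ← integral_Icc_eq_integral_Ioc,
    ofReal_integral_eq_lintegral_ofReal hg hg0]

namespace GBE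

variable {Ω : Type*} {m0 : MeasurableSpace Ω} {μ : Measure Ω} {ℱ : Filtration ℝ m0}
  {X : ℝ → Ω → ℝ}

/-- The call price `C(t,x) = E[(X_t - x)⁺]`. -/
def callPrice (μ : Measure Ω) (X : ℝ → Ω → ℝ) (t x : ℝ) : ℝ := ∫ ω, max (X t ω - x) 0 ∂μ

lemma callPrice_nonneg (t x : ℝ) : 0 ≤ callPrice μ X t x :=
  integral_nonneg fun _ => le_max_right _ _

lemma integrable_max_sub [IsFiniteMeasure μ] {Y : Ω → ℝ} (hY : Integrable Y μ) (x : ℝ) :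
    Integrable (fun ω => max (Y ω - x) 0) μ :=
  (hY.sub (integrable_const x)).pos_part

lemma callPrice_antitone [IsFiniteMeasure μ] {t : ℝ} (hX : Integrable (X t) μ) :
    Antitone (callPrice μ X t) := fun _ _ hxy =>
  integral_mono (integrable_max_sub hX _) (integrable_max_sub hX _)
    fun _ => max_le_max (by linarith) le_rfl

lemma condVar_nonneg {T : ℝ} (hT : 0 ≤ T) (hbdd : BddAbove (simpleVals μ ℱ X T)) :
    0 ≤ condVar μ ℱ X T :=
  le_csSup hbdd ⟨0, fun _ => 0, finZeroElim, monotone_const, fun _ => ⟨le_rfl, hT⟩,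
    finZeroElim, by simp⟩

lemma integral_ite_lt_mul_sub_le_callPrice_sub [IsFiniteMeasure μ] (hX : ∀ t, Measurable (X t))
    (hint : ∀ t, Integrable (X t) μ) (x a b : ℝ) :
    ∫ ω, (if x < X a ω then (1 : ℝ) else 0) * (X b ω - X a ω) ∂μ
      ≤ callPrice μ X b x - callPrice μ X a x := by
  have hind : Integrable (fun ω => (if x < X a ω then (1 : ℝ) else 0) * (X b ω - X a ω)) μ := by
    refine ((hint b).sub (hint a)).bdd_mul (c := 1) ?_ (ae_of_all _ fun ω => ?_)
    · exact (Measurable.ite (measurableSet_lt measurable_const (hX a)) measurable_const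
        measurable_const).aestronglyMeasurable
    · split_ifs <;> simp
  rw [callPrice, callPrice, ← integral_sub (integrable_max_sub (hint b) x)
    (integrable_max_sub (hint a) x)]
  exact integral_mono hind ((integrable_max_sub (hint b) x).sub (integrable_max_sub (hint a) x))
    fun ω => ite_lt_mul_sub_le_max_sub_max x (X a ω) (X b ω)

lemma exists_integrand_max_callPrice_sub_le [IsFiniteMeasure μ] (hX : Adapted ℱ X)
    (hint : ∀ t, Integrable (X t) μ) (x a b : ℝ) :
    ∃ ζ : Ω → ℝ, Measurable[ℱ a] ζ ∧ (∀ ω, |ζ ω| ≤ 1) ∧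
      max (callPrice μ X a x - callPrice μ X b x) 0 ≤ ∫ ω, ζ ω * (X b ω - X a ω) ∂μ := by
  by_cases hdec : callPrice μ X b x < callPrice μ X a x
  · refine ⟨fun ω => -(if x < X a ω then 1 else 0),
      (Measurable.ite (measurableSet_lt measurable_const (hX a)) measurable_const
        measurable_const).neg, fun ω => by dsimp only; split_ifs <;> simp, ?_⟩
    have := integral_ite_lt_mul_sub_le_callPrice_sub (fun t => (hX t).mono (ℱ.le t) le_rfl)
      hint x a b
    simp only [neg_mul, integral_neg, max_eq_left (sub_nonneg.2 hdec.le)]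
    linarith
  · exact ⟨0, measurable_const, by simp, by simp [max_eq_right (sub_nonpos.2 (not_lt.1 hdec))]⟩

lemma sum_max_callPrice_sub_le_condVar [IsFiniteMeasure μ] (hX : Adapted ℱ X)
    (hint : ∀ t, Integrable (X t) μ) {T : ℝ} (hbdd : BddAbove (simpleVals μ ℱ X T)) (x : ℝ)
    (m : ℕ) {w : ℕ → ℝ} (hw : Monotone w) (hwT : ∀ i, w i ∈ Icc 0 T) :
    ∑ i ∈ Finset.range m, max (callPrice μ X (w i) x - callPrice μ X (w (i + 1)) x) 0
      ≤ condVar μ ℱ X T := by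
  choose ζ hζ_meas hζ_bdd hζ using fun i : ℕ =>
    exists_integrand_max_callPrice_sub_le hX hint x (w i) (w (i + 1))
  have hζ_int : ∀ i, Integrable (fun ω => ζ i ω * (X (w (i + 1)) ω - X (w i) ω)) μ := fun i =>
    ((hint _).sub (hint _)).bdd_mul ((hζ_meas i).mono (ℱ.le _) le_rfl).aestronglyMeasurable
      (ae_of_all _ fun ω => by simpa using hζ_bdd i ω)
  have hmem : ∫ ω, ∑ i : Fin m, ζ i ω * (X (w (i + 1)) ω - X (w i) ω) ∂μ ∈ simpleVals μ ℱ X T :=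
    ⟨m, fun i => w i, fun i => ζ i, fun i j hij => hw hij, fun i => hwT i,
      fun i => ⟨hζ_meas i, hζ_bdd i⟩, by simp only [Fin.val_succ, Fin.val_castSucc]⟩
  calc ∑ i ∈ Finset.range m, max (callPrice μ X (w i) x - callPrice μ X (w (i + 1)) x) 0
      ≤ ∑ i ∈ Finset.range m, ∫ ω, ζ i ω * (X (w (i + 1)) ω - X (w i) ω) ∂μ :=
        Finset.sum_le_sum fun i _ => hζ i
    _ = ∫ ω, ∑ i : Fin m, ζ i ω * (X (w (i + 1)) ω - X (w i) ω) ∂μ := by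
        rw [integral_finsetSum _ fun (i : Fin m) _ => hζ_int i,
          Fin.sum_univ_eq_sum_range (fun i => ∫ ω, ζ i ω * (X (w (i + 1)) ω - X (w i) ω) ∂μ)]
    _ ≤ condVar μ ℱ X T := le_csSup hbdd hmem

lemma eVariationOn_callPrice_le [IsFiniteMeasure μ] (hX : Adapted ℱ X)
    (hint : ∀ t, Integrable (X t) μ) {T : ℝ} (hT : 0 ≤ T)
    (hbdd : BddAbove (simpleVals μ ℱ X T)) (x : ℝ) :
    eVariationOn (fun t => callPrice μ X t x) (Icc 0 T)
      ≤ ENNReal.ofReal (callPrice μ X T x + 2 * condVar μ ℱ X T) :=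
  eVariationOn_le_of_sum_max_sub_le (isGreatest_Icc hT) (fun t _ => callPrice_nonneg t x)
    fun m _ hw hwT => sum_max_callPrice_sub_le_condVar hX hint hbdd x m hw hwT

end GBE

theorem stmt3_general {Ω : Type*} {m0 : MeasurableSpace Ω} (μ : Measure Ω) [IsProbabilityMeasure μ]
    (ℱ : Filtration ℝ m0) (X : ℝ → Ω → ℝ)
    (hqm : IsQuasimartingale μ ℱ X)
    (C : ℝ → ℝ → ℝ) (hC : ∀ t x, C t x = ∫ ω, max (X t ω - x) 0 ∂μ)
    (K₀ K₁ T : ℝ) (hK : K₀ < K₁) (hT : 0 < T) :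
    (∫⁻ x in Icc K₀ K₁, eVariationOn (fun t => C t x) (Icc 0 T))
      ≤ ENNReal.ofReal (∫ x in K₀..K₁, (C T x + 2 * condVar μ ℱ X T)) ∧
    (∫⁻ x in Icc K₀ K₁, eVariationOn (fun t => C t x) (Icc 0 T)) < ⊤ := by
  obtain ⟨-, hX, hint, hbdd⟩ := hqm
  obtain rfl : C = callPrice μ X := funext fun t => funext fun x => hC t x
  have hbound_anti : Antitone fun x => callPrice μ X T x + 2 * condVar μ ℱ X T :=
    fun _ _ hxy => add_le_add_left (callPrice_antitone (hint T) hxy) _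
  have hle := calc
    ∫⁻ x in Icc K₀ K₁, eVariationOn (fun t => callPrice μ X t x) (Icc 0 T)
        ≤ ∫⁻ x in Icc K₀ K₁, ENNReal.ofReal (callPrice μ X T x + 2 * condVar μ ℱ X T) :=
          lintegral_mono fun x => eVariationOn_callPrice_le hX hint hT.le (hbdd T) x
    _ = ENNReal.ofReal (∫ x in K₀..K₁, (callPrice μ X T x + 2 * condVar μ ℱ X T)) :=
          lintegral_Icc_ofReal_eq_intervalIntegral hK.le
            ((hbound_anti.antitoneOn _).integrableOn_isCompact isCompact_Icc)
            (ae_of_all _ fun x => add_nonneg (callPrice_nonneg T x)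
              (mul_nonneg zero_le_two (condVar_nonneg hT.le (hbdd T))))
  exact ⟨hle, hle.trans_lt ENNReal.ofReal_lt_top⟩

/-- for a class (DL) quasimartingale, the variation in `t` of `C(t,x)`
on `[0,T]`, integrated in `x` over `[K₀,K₁]`, is bounded by
`∫ (C(T,x) + 2 Var_X(T)) dx` and is finite. -/
theorem stmt3 {Ω : Type*} {m0 : MeasurableSpace Ω} (μ : Measure Ω) [IsProbabilityMeasure μ]
    (ℱ : Filtration ℝ m0) (X : ℝ → Ω → ℝ)
    (hqm : IsQuasimartingale μ ℱ X) (hDL : ClassDL μ ℱ X)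
    (C : ℝ → ℝ → ℝ) (hC : ∀ t x, C t x = ∫ ω, max (X t ω - x) 0 ∂μ)
    (K₀ K₁ T : ℝ) (hK : K₀ < K₁) (hT : 0 < T) :
    (∫⁻ x in Icc K₀ K₁, eVariationOn (fun t => C t x) (Icc 0 T))
      ≤ ENNReal.ofReal (∫ x in K₀..K₁, (C T x + 2 * condVar μ ℱ X T)) ∧
    (∫⁻ x in Icc K₀ K₁, eVariationOn (fun t => C t x) (Icc 0 T)) < ⊤ :=
  stmt3_general μ ℱ X hqm C hC K₀ K₁ T hK hT
end
end

section
/- Every càdlàg process of locally finite variation has zero continuous quadratic variation: its quadratic variation [V] exists (as a ucp limit of sums along partitions with mesh tending to 0) and equals the sum of squared jumps, [V]_t = Σ_{s ≤ t} (ΔV_s)². -/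
open MeasureTheory Filter Set Function Topology

noncomputable section

open GBE MeasureTheory Set Filter Function

/-!
Fix a path `f` and a horizon `T`; frozen outside `[0, T]`, the path has bounded variation on the
whole line, and its variation function `v` is monotone, right-continuous, and jumps by `|Δf|`.
A Lebesgue number argument shows that for every `δ > 0` each short enough interval
`(a, b] ⊆ [0, T]` contains a point `s` with `v b - v a ≤ δ + |Δf s|`: the interval carries one
jump and little else. Then `(f b - f a)²` and `∑_{a < x ≤ b} (Δf x)²` both equal `(Δf s)²` up to
`O(δ (v b - v a))`, and summing over a partition of small mesh gives an error `O(δ (v T - v 0))`,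
uniformly in `t ≤ T`. Pathwise uniform convergence gives ucp convergence once the supremum over
`[0, T]` is replaced, by right-continuity, by one over countably many times.
-/

namespace Monotone

variable {v : ℝ → ℝ}

theorem sum_sub_leftLim_le (hv : Monotone v) {a b : ℝ} (hab : a ≤ b) {F : Finset ℝ}
    (hF : ↑F ⊆ Ioc a b) : ∑ x ∈ F, (v x - leftLim v x) ≤ v b - v a := by
  induction F using Finset.induction_on_max generalizing b with
  | empty => simpa using hv hab
  | insert x F hlt ih =>
    have hx : x ∈ Ioc a b := hF (Finset.mem_insert_self x F)
    obtain ⟨c, hac, hcx, hFc⟩ : ∃ c, a ≤ c ∧ c < x ∧ ↑F ⊆ Ioc a c := by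
      rcases F.eq_empty_or_nonempty with rfl | hne
      · exact ⟨a, le_rfl, hx.1, by simp⟩
      · have hmem : ∀ y ∈ F, y ∈ Ioc a b := fun y hy => hF (Finset.mem_insert_of_mem hy)
        exact ⟨F.max' hne, (hmem _ (F.max'_mem hne)).1.le, hlt _ (F.max'_mem hne),
          fun y hy => ⟨(hmem y hy).1, F.le_max' y hy⟩⟩
    rw [Finset.sum_insert fun h => (hlt x h).false]
    linarith [ih hac hFc, hv.le_leftLim hcx, hv hx.2]

theorem exists_pos_forall_sub_le_add_jump (hv : Monotone v)
    (hrc : ∀ x, ContinuousWithinAt v (Ici x) x) {K : Set ℝ} (hK : IsCompact K) {δ : ℝ}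
    (hδ : 0 < δ) : ∃ η > 0, ∀ a ∈ K, ∀ b, a < b → b - a < η →
      ∃ s ∈ Ioc a b, v b - v a ≤ δ + (v s - leftLim v s) := by
  have hright : ∀ x, ∃ c, x < c ∧ v c < v x + δ / 2 := fun x =>
    ((((hrc x).mono Ioi_subset_Ici_self).eventually (gt_mem_nhds (by linarith))).and
      self_mem_nhdsWithin).exists.imp fun c h => ⟨h.2, h.1⟩
  have hleft : ∀ x, ∃ c, c < x ∧ leftLim v x - δ / 2 < v c := fun x =>
    (((hv.tendsto_leftLim x).eventually (lt_mem_nhds (by linarith))).and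
      self_mem_nhdsWithin).exists.imp fun c h => ⟨h.2, h.1⟩
  choose cR hxcR hcR using hright
  choose cL hcLx hcL using hleft
  obtain ⟨η, hη, hball⟩ := lebesgue_number_lemma_of_metric hK (c := fun x => Ioo (cL x) (cR x))
    (fun _ => isOpen_Ioo) fun x _ => mem_iUnion.2 ⟨x, hcLx x, hxcR x⟩
  refine ⟨η, hη, fun a ha b hab hbη => ?_⟩
  obtain ⟨x, hx⟩ := hball a ha
  have haI : a ∈ Ioo (cL x) (cR x) := hx (Metric.mem_ball_self hη)
  have hbI : b ∈ Ioo (cL x) (cR x) :=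
    hx (by rw [Metric.mem_ball, Real.dist_eq, abs_of_pos (sub_pos.2 hab)]; exact hbη)
  have hjump : 0 ≤ v b - leftLim v b := sub_nonneg.2 (hv.leftLim_le le_rfl)
  rcases le_or_gt x a with hxa | hax
  · exact ⟨b, right_mem_Ioc.2 hab, by linarith [hv hbI.2.le, hv hxa, hcR x]⟩
  rcases le_or_gt x b with hxb | hbx
  · exact ⟨x, ⟨hax, hxb⟩, by linarith [hv hbI.2.le, hv haI.1.le, hcR x, hcL x]⟩
  · exact ⟨b, right_mem_Ioc.2 hab, by linarith [hv.le_leftLim hbx, hv haI.1.le, hcL x]⟩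

end Monotone

section SquareSums

variable {ι : Type*} {w : ι → ℝ} {m : ℝ}

theorem summable_sq_of_sum_le (hw : ∀ i, 0 ≤ w i) (hsum : ∀ u : Finset ι, ∑ i ∈ u, w i ≤ m) :
    Summable fun i => w i ^ 2 :=
  ((summable_of_sum_le hw hsum).mul_left m).of_nonneg_of_le (fun i => sq_nonneg _) fun i => by
    have : w i ≤ m := by simpa using hsum {i}
    nlinarith [hw i]

theorem tsum_sq_le_of_sum_le (hw : ∀ i, 0 ≤ w i) (hsum : ∀ u : Finset ι, ∑ i ∈ u, w i ≤ m) :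
    ∑' i, w i ^ 2 ≤ m ^ 2 := by
  have hwm : ∀ i, w i ≤ m := fun i => by simpa using hsum {i}
  have hsw := summable_of_sum_le hw hsum
  rcases isEmpty_or_nonempty ι with hι | ⟨⟨j⟩⟩
  · simp [sq_nonneg]
  have hm : 0 ≤ m := (hw j).trans (hwm j)
  calc ∑' i, w i ^ 2 ≤ ∑' i, m * w i :=
        (summable_sq_of_sum_le hw hsum).tsum_le_tsum (fun i => by nlinarith [hw i, hwm i])
          (hsw.mul_left m)
    _ ≤ m ^ 2 := by
        rw [tsum_mul_left, sq]
        exact mul_le_mul_of_nonneg_left (hsw.tsum_le_of_sum_le hsum) hm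

/-- Every term other than `w j` is at most `m` times its own weight, and these weights add up
to at most `m - w j`. -/
theorem abs_tsum_sq_sub_sq_le (hw : ∀ i, 0 ≤ w i) (hsum : ∀ u : Finset ι, ∑ i ∈ u, w i ≤ m)
    (j : ι) : |∑' i, w i ^ 2 - w j ^ 2| ≤ m * (m - w j) := by
  classical
  have hwm : ∀ i, w i ≤ m := fun i => by simpa using hsum {i}
  set r : ι → ℝ := fun i => if i = j then 0 else w i with hr
  have hr0 : ∀ i, 0 ≤ r i := fun i => by simp only [hr]; split_ifs <;> simp [hw i]
  have hsr : Summable r := (summable_of_sum_le hw hsum).of_nonneg_of_le hr0 fun i => by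
    simp only [hr]; split_ifs <;> simp [hw i]
  have hrsum : ∑' i, r i ≤ m - w j := by
    refine hsr.tsum_le_of_sum_le fun u => ?_
    have h := hsum (insert j (u.erase j))
    rw [Finset.sum_insert (Finset.notMem_erase j u)] at h
    rw [← Finset.sum_erase u (show r j = 0 by simp [hr])]
    rw [Finset.sum_congr rfl fun i hi => if_neg (Finset.ne_of_mem_erase hi)]
    linarith
  have hsplit : ∑' i, w i ^ 2 - w j ^ 2 = ∑' i, (if i = j then 0 else w i ^ 2) := by
    rw [(summable_sq_of_sum_le hw hsum).tsum_eq_add_tsum_ite j, add_sub_cancel_left]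
  have hterm : ∀ i, (if i = j then 0 else w i ^ 2) ≤ m * r i := fun i => by
    simp only [hr]; split_ifs <;> nlinarith [hw i, hwm i]
  rw [hsplit, abs_of_nonneg (tsum_nonneg fun i => by split_ifs <;> positivity)]
  calc ∑' i, (if i = j then 0 else w i ^ 2) ≤ ∑' i, m * r i :=
        ((summable_sq_of_sum_le hw hsum).of_nonneg_of_le (fun i => by split_ifs <;> positivity)
          fun i => by split_ifs <;> simp [sq_nonneg]) |>.tsum_le_tsum hterm (hsr.mul_left m)
    _ ≤ m * (m - w j) := by
        rw [tsum_mul_left]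
        exact mul_le_mul_of_nonneg_left hrsum ((hw j).trans (hwm j))

end SquareSums

namespace BoundedVariationOn

variable {g : ℝ → ℝ}

theorem monotone_variationOnFromTo (hg : BoundedVariationOn g univ) (a : ℝ) :
    Monotone (variationOnFromTo g univ a) := fun x y hxy =>
  variationOnFromTo.monotoneOn hg.locallyBoundedVariationOn (mem_univ a) (mem_univ x)
    (mem_univ y) hxy

theorem abs_sub_le_variationOnFromTo (hg : BoundedVariationOn g univ) {x y : ℝ} (hxy : x ≤ y) :
    |g y - g x| ≤ variationOnFromTo g univ 0 y - variationOnFromTo g univ 0 x :=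
  variationOnFromTo.abs_sub_le_sub_of_le hg.locallyBoundedVariationOn (mem_univ 0) (mem_univ x)
    (mem_univ y) hxy

theorem abs_jump_eq (hg : BoundedVariationOn g univ) (x : ℝ) :
    |jump g x| =
      variationOnFromTo g univ 0 x - Function.leftLim (variationOnFromTo g univ 0) x := by
  rw [variationOnFromTo.leftLim_eq hg, jump, Real.dist_eq]
  ring

theorem abs_leftLim_sub_le (hg : BoundedVariationOn g univ) {a s : ℝ} (has : a < s) :
    |Function.leftLim g s - g a| ≤
      Function.leftLim (variationOnFromTo g univ 0) s - variationOnFromTo g univ 0 a :=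
  le_of_tendsto_of_tendsto ((hg.tendsto_leftLim s).sub_const (g a)).abs
    (((hg.monotone_variationOnFromTo 0).tendsto_leftLim s).sub_const _) <| by
      filter_upwards [Ioo_mem_nhdsLT has] with u hu using
        hg.abs_sub_le_variationOnFromTo hu.1.le

theorem sum_abs_jump_le (hg : BoundedVariationOn g univ) {a b : ℝ} (hab : a ≤ b)
    (u : Finset (Ioc a b)) : ∑ x ∈ u, |jump g x| ≤
      variationOnFromTo g univ 0 b - variationOnFromTo g univ 0 a := by
  have hsub : ↑(u.map (Embedding.subtype _)) ⊆ Ioc a b := by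
    intro x hx
    obtain ⟨y, -, rfl⟩ := Finset.mem_map.1 hx
    exact y.2
  simpa [abs_jump_eq hg] using
    (hg.monotone_variationOnFromTo 0).sum_sub_leftLim_le hab hsub

theorem summable_sq_jump (hg : BoundedVariationOn g univ) {a b : ℝ} (hab : a ≤ b) :
    Summable fun x : Ioc a b => jump g x ^ 2 := by
  simpa using summable_sq_of_sum_le (fun _ => abs_nonneg _) (hg.sum_abs_jump_le hab)

theorem tsum_sq_jump_le (hg : BoundedVariationOn g univ) {a b : ℝ} (hab : a ≤ b) :
    ∑' x : Ioc a b, jump g x ^ 2 ≤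
      (variationOnFromTo g univ 0 b - variationOnFromTo g univ 0 a) ^ 2 := by
  simpa using tsum_sq_le_of_sum_le (fun _ => abs_nonneg _) (hg.sum_abs_jump_le hab)

theorem tsum_sq_jump_Ioc_add (hg : BoundedVariationOn g univ) {a b c : ℝ} (hab : a ≤ b)
    (hbc : b ≤ c) : ∑' x : Ioc a b, jump g x ^ 2 + ∑' x : Ioc b c, jump g x ^ 2 =
      ∑' x : Ioc a c, jump g x ^ 2 := by
  have h := Summable.tsum_union_disjoint (f := fun x => jump g x ^ 2)
    (Ioc_disjoint_Ioc_of_le le_rfl) (hg.summable_sq_jump hab) (hg.summable_sq_jump hbc)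
  rw [← h, Ioc_union_Ioc_eq_Ioc hab hbc]

/-- With `m` the variation on `[a, b]`, the remainder `r = m - |Δg s|` bounds both
`|(g b - g a) - Δg s|` and the total size of the other jumps in `(a, b]`. -/
theorem abs_sq_sub_tsum_sq_jump_le (hg : BoundedVariationOn g univ) {a b s : ℝ}
    (hs : s ∈ Ioc a b) :
    |(g b - g a) ^ 2 - ∑' x : Ioc a b, jump g x ^ 2| ≤
      3 * (variationOnFromTo g univ 0 b - variationOnFromTo g univ 0 a) *
        (variationOnFromTo g univ 0 b - variationOnFromTo g univ 0 a - |jump g s|) := by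
  set v := variationOnFromTo g univ 0
  set m := v b - v a
  have hab : a ≤ b := hs.1.le.trans hs.2
  have hsum := hg.sum_abs_jump_le hab
  have hJm : |jump g s| ≤ m := by simpa using hsum {⟨s, hs⟩}
  have hDm : |g b - g a| ≤ m := hg.abs_sub_le_variationOnFromTo hab
  have hD : |(g b - g a) - jump g s| ≤ m - |jump g s| := by
    have h1 := hg.abs_sub_le_variationOnFromTo hs.2
    have h2 := hg.abs_leftLim_sub_le hs.1
    have hJ := hg.abs_jump_eq s
    calc |(g b - g a) - jump g s| = |(g b - g s) + (Function.leftLim g s - g a)| := by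
          rw [jump]; ring_nf
      _ ≤ |g b - g s| + |Function.leftLim g s - g a| := abs_add_le _ _
      _ ≤ m - |jump g s| := by linarith
  have hsq : |(g b - g a) ^ 2 - jump g s ^ 2| ≤ (m - |jump g s|) * (2 * m) := by
    rw [sq_sub_sq, abs_mul, mul_comm]
    exact mul_le_mul hD ((abs_add_le _ _).trans (by linarith [abs_nonneg (jump g s)]))
      (abs_nonneg _) ((abs_nonneg _).trans hD)
  have hjumps : |∑' x : Ioc a b, jump g x ^ 2 - jump g s ^ 2| ≤ m * (m - |jump g s|) := by
    simpa using abs_tsum_sq_sub_sq_le (fun _ => abs_nonneg _) hsum ⟨s, hs⟩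
  calc |(g b - g a) ^ 2 - ∑' x : Ioc a b, jump g x ^ 2|
      ≤ |(g b - g a) ^ 2 - jump g s ^ 2| + |∑' x : Ioc a b, jump g x ^ 2 - jump g s ^ 2| :=
        (abs_sub_le _ (jump g s ^ 2) _).trans_eq (by rw [abs_sub_comm (jump g s ^ 2)])
    _ ≤ (m - |jump g s|) * (2 * m) + m * (m - |jump g s|) := add_le_add hsq hjumps
    _ = 3 * m * (m - |jump g s|) := by ring

end BoundedVariationOn

theorem hasSum_sq_increments (f : ℝ → ℝ) {τ : ℕ → ℝ} (hτ : Monotone τ) {t : ℝ} {K : ℕ}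
    (hK : t ≤ τ K) : HasSum (fun k => (f (min (τ (k + 1)) t) - f (min (τ k) t)) ^ 2)
      (∑ k ∈ Finset.range K, (f (min (τ (k + 1)) t) - f (min (τ k) t)) ^ 2) :=
  hasSum_sum_of_ne_finset_zero fun k hk => by
    have hKk : K ≤ k := by simpa using hk
    rw [min_eq_right (hK.trans (hτ hKk)), min_eq_right (hK.trans (hτ (hKk.trans k.le_succ)))]
    ring

theorem continuousWithinAt_Ici_comp {f φ : ℝ → ℝ} (hf : ∀ x, ContinuousWithinAt f (Ici x) x)
    (hφ : Monotone φ) (hφc : Continuous φ) (t : ℝ) :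
    ContinuousWithinAt (fun s => f (φ s)) (Ici t) t :=
  (hf (φ t)).comp hφc.continuousWithinAt fun _ hs => hφ hs

theorem continuousWithinAt_tsum_sq_increments {f : ℝ → ℝ}
    (hrc : ∀ t, ContinuousWithinAt f (Ici t) t) {τ : ℕ → ℝ} (hτ : Monotone τ)
    (htop : Tendsto τ atTop atTop) (t₀ : ℝ) :
    ContinuousWithinAt (fun t => ∑' k, (f (min (τ (k + 1)) t) - f (min (τ k) t)) ^ 2)
      (Ici t₀) t₀ := by
  obtain ⟨K, hK⟩ := (htop.eventually_ge_atTop (t₀ + 1)).exists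
  have hterm : ∀ c, ContinuousWithinAt (fun t => f (min c t)) (Ici t₀) t₀ := fun c =>
    continuousWithinAt_Ici_comp hrc (fun _ _ h => min_le_min_left c h)
      (continuous_const.min continuous_id) t₀
  have hsum : ContinuousWithinAt
      (fun t => ∑ k ∈ Finset.range K, (f (min (τ (k + 1)) t) - f (min (τ k) t)) ^ 2)
      (Ici t₀) t₀ :=
    tendsto_finsetSum _ fun k _ => ((hterm _).sub (hterm _)).pow 2
  refine hsum.congr_of_eventuallyEq ?_ (hasSum_sq_increments f hτ (by linarith)).tsum_eq
  filter_upwards [mem_nhdsWithin_of_mem_nhds (Iic_mem_nhds (lt_add_one t₀))] with t ht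
  exact (hasSum_sq_increments f hτ (le_trans ht hK)).tsum_eq

namespace BoundedVariationOn

variable {g : ℝ → ℝ}

theorem exists_pos_abs_sum_sq_sub_tsum_sq_jump_le (hg : BoundedVariationOn g univ)
    (hrc : ∀ t, ContinuousWithinAt g (Ici t) t) (T : ℝ) {δ : ℝ} (hδ : 0 < δ) :
    ∃ η > 0, ∀ p : ℕ → ℝ, Monotone p → (∀ k, p k ∈ Icc 0 T) → (∀ k, p (k + 1) - p k < η) →
      ∀ K, |∑ k ∈ Finset.range K, (g (p (k + 1)) - g (p k)) ^ 2 -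
          ∑' x : Ioc (p 0) (p K), jump g x ^ 2| ≤
        3 * δ * (variationOnFromTo g univ 0 (p K) - variationOnFromTo g univ 0 (p 0)) := by
  set v := variationOnFromTo g univ 0
  have hv := hg.monotone_variationOnFromTo 0
  obtain ⟨η, hη, hosc⟩ := hv.exists_pos_forall_sub_le_add_jump
    (fun t => hg.continuousWithinAt_variationOnFromTo_Ici (hrc t)) isCompact_Icc hδ
  refine ⟨η, hη, fun p hp hpT hpη K => ?_⟩
  have hstep : ∀ k, |(g (p (k + 1)) - g (p k)) ^ 2 - ∑' x : Ioc (p k) (p (k + 1)), jump g x ^ 2|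
      ≤ 3 * δ * (v (p (k + 1)) - v (p k)) := by
    intro k
    rcases (hp k.le_succ).eq_or_lt with heq | hlt
    · simp [heq]
    obtain ⟨s, hs, hle⟩ := hosc _ (hpT k) _ hlt (hpη k)
    rw [← hg.abs_jump_eq] at hle
    have hm : 0 ≤ v (p (k + 1)) - v (p k) := sub_nonneg.2 (hv hlt.le)
    calc _ ≤ 3 * (v (p (k + 1)) - v (p k)) * (v (p (k + 1)) - v (p k) - |jump g s|) :=
          hg.abs_sq_sub_tsum_sq_jump_le hs
      _ ≤ 3 * δ * (v (p (k + 1)) - v (p k)) := by nlinarith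
  induction K with
  | zero => simp
  | succ K ih =>
    rw [Finset.sum_range_succ, ← hg.tsum_sq_jump_Ioc_add (hp K.zero_le) (hp K.le_succ)]
    calc _ ≤ |∑ k ∈ Finset.range K, (g (p (k + 1)) - g (p k)) ^ 2 -
            ∑' x : Ioc (p 0) (p K), jump g x ^ 2| +
          |(g (p (K + 1)) - g (p K)) ^ 2 - ∑' x : Ioc (p K) (p (K + 1)), jump g x ^ 2| :=
          (abs_add_le _ _).trans_eq' (by ring_nf)
      _ ≤ _ := by linarith [hstep K]

theorem tendstoUniformlyOn_sum_sq_increments (hg : BoundedVariationOn g univ)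
    (hrc : ∀ t, ContinuousWithinAt g (Ici t) t) {τ : ℕ → ℕ → ℝ} (h0 : ∀ n, τ n 0 = 0)
    (hmono : ∀ n, Monotone (τ n)) (htop : ∀ n, Tendsto (τ n) atTop atTop)
    (hmesh : ∀ ε > 0, ∃ N, ∀ n ≥ N, ∀ k, τ n (k + 1) - τ n k ≤ ε) (T : ℝ) :
    TendstoUniformlyOn (fun n t => ∑' k, (g (min (τ n (k + 1)) t) - g (min (τ n k) t)) ^ 2)
      (fun t => ∑' x : Ioc 0 t, jump g x ^ 2) atTop (Icc 0 T) := by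
  rcases lt_or_ge T 0 with hT | hT
  · rw [Icc_eq_empty (not_le.2 hT)]
    exact tendstoUniformlyOn_empty
  set v := variationOnFromTo g univ 0
  have hv := hg.monotone_variationOnFromTo 0
  rw [Metric.tendstoUniformlyOn_iff]
  intro ε hε
  have hC : 0 ≤ v T - v 0 := sub_nonneg.2 (hv hT)
  set δ := ε / (3 * (v T - v 0 + 1))
  have hδ : 0 < δ := by positivity
  obtain ⟨η, hη, hest⟩ := hg.exists_pos_abs_sum_sq_sub_tsum_sq_jump_le hrc T hδ
  obtain ⟨N, hN⟩ := hmesh (η / 2) (half_pos hη)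
  filter_upwards [eventually_ge_atTop N] with n hn t ht
  obtain ⟨K, hK⟩ := ((htop n).eventually_ge_atTop t).exists
  have hτ0 : ∀ k, 0 ≤ τ n k := fun k => h0 n ▸ hmono n k.zero_le
  have hinc : ∀ k, min (τ n (k + 1)) t - min (τ n k) t < η := fun k => by
    have h := abs_min_sub_min_le_max (τ n (k + 1)) t (τ n k) t
    rw [sub_self, abs_zero, max_eq_left (abs_nonneg _),
      abs_of_nonneg (sub_nonneg.2 (hmono n k.le_succ))] at h
    linarith [le_abs_self (min (τ n (k + 1)) t - min (τ n k) t), hN n hn k]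
  have h := hest (fun k => min (τ n k) t) (fun i j hij => min_le_min_right t (hmono n hij))
    (fun k => ⟨le_min (hτ0 k) ht.1, (min_le_right _ _).trans ht.2⟩) hinc K
  rw [h0, min_eq_left ht.1, min_eq_right hK] at h
  have hδC : 3 * δ * (v T - v 0 + 1) = ε := by simp only [δ]; field_simp
  rw [Real.dist_eq, abs_sub_comm, (hasSum_sq_increments g (hmono n) hK).tsum_eq]
  calc _ ≤ 3 * δ * (v t - v 0) := h
    _ ≤ 3 * δ * (v T - v 0) := by gcongr; exact hv ht.2
    _ < ε := by linarith

theorem continuousWithinAt_tsum_sq_jump (hg : BoundedVariationOn g univ)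
    (hrc : ∀ t, ContinuousWithinAt g (Ici t) t) {t₀ : ℝ} (ht₀ : 0 ≤ t₀) :
    ContinuousWithinAt (fun t => ∑' x : Ioc 0 t, jump g x ^ 2) (Ici t₀) t₀ := by
  set v := variationOnFromTo g univ 0
  have hv : Tendsto (fun t => (v t - v t₀) ^ 2) (𝓝[≥] t₀) (𝓝 0) := by
    have h := ((hg.continuousWithinAt_variationOnFromTo_Ici (a := 0) (hrc t₀)).sub_const
      (v t₀)).pow 2
    rwa [sub_self, zero_pow two_ne_zero] at h
  rw [ContinuousWithinAt, ← tendsto_sub_nhds_zero_iff]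
  refine squeeze_zero' ?_ ?_ hv <;> filter_upwards [self_mem_nhdsWithin] with t ht <;>
    rw [← hg.tsum_sq_jump_Ioc_add ht₀ ht, add_sub_cancel_left]
  · exact tsum_nonneg fun _ => sq_nonneg _
  · exact hg.tsum_sq_jump_le ht

end BoundedVariationOn

section Clamp

variable {f : ℝ → ℝ} {T : ℝ}

theorem boundedVariationOn_comp_clamp (hT : 0 ≤ T) (hf : eVariationOn f (Icc 0 T) ≠ ⊤) :
    BoundedVariationOn (fun t => f (max 0 (min t T))) univ :=
  ne_top_of_le_ne_top hf <| eVariationOn.comp_le_of_monotoneOn f (fun t => max 0 (min t T))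
    (fun _ _ _ _ hxy => max_le_max le_rfl (min_le_min_right T hxy))
    fun _ _ => ⟨le_max_left _ _, max_le hT (min_le_right _ _)⟩

theorem continuousWithinAt_Ici_comp_clamp (hrc : ∀ x, ContinuousWithinAt f (Ici x) x) (t : ℝ) :
    ContinuousWithinAt (fun s => f (max 0 (min s T))) (Ici t) t :=
  continuousWithinAt_Ici_comp hrc (fun _ _ h => max_le_max le_rfl (min_le_min_right T h))
    (continuous_const.max (continuous_id.min continuous_const)) t

theorem max_zero_min_of_mem_Icc {t : ℝ} (ht : t ∈ Icc 0 T) : max 0 (min t T) = t := by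
  rw [min_eq_left ht.2, max_eq_right ht.1]

theorem tsum_sq_jump_comp_clamp (hT : 0 ≤ T) (hf : eVariationOn f (Icc 0 T) ≠ ⊤) {t : ℝ}
    (htT : t ≤ T) : ∑' x : Ioc 0 t, jump (fun t => f (max 0 (min t T))) x ^ 2 =
      ∑' x : Ioc 0 t, jump f x ^ 2 := by
  refine tsum_congr fun ⟨x, hx⟩ => ?_
  have hxT : x ∈ Icc 0 T := ⟨hx.1.le, hx.2.trans htT⟩
  have hlim := (boundedVariationOn_comp_clamp hT hf).tendsto_leftLim x
  have heq : (fun t => f (max 0 (min t T))) =ᶠ[𝓝[<] x] f := by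
    filter_upwards [Ioo_mem_nhdsLT hx.1] with y hy
    rw [max_zero_min_of_mem_Icc ⟨hy.1.le, hy.2.le.trans hxT.2⟩]
  simp only [jump, max_zero_min_of_mem_Icc hxT, leftLim_eq_of_tendsto (hlim.congr' heq)]

end Clamp

theorem tendstoUniformlyOn_sum_sq_increments {f : ℝ → ℝ}
    (hrc : ∀ t, ContinuousWithinAt f (Ici t) t) (hfv : ∀ T, eVariationOn f (Icc 0 T) < ⊤)
    {τ : ℕ → ℕ → ℝ} (h0 : ∀ n, τ n 0 = 0)
    (hmono : ∀ n, Monotone (τ n)) (htop : ∀ n, Tendsto (τ n) atTop atTop)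
    (hmesh : ∀ ε > 0, ∃ N, ∀ n ≥ N, ∀ k, τ n (k + 1) - τ n k ≤ ε) (T : ℝ) :
    TendstoUniformlyOn (fun n t => ∑' k, (f (min (τ n (k + 1)) t) - f (min (τ n k) t)) ^ 2)
      (fun t => ∑' x : Ioc 0 t, jump f x ^ 2) atTop (Icc 0 T) := by
  rcases lt_or_ge T 0 with hT | hT
  · rw [Icc_eq_empty (not_le.2 hT)]
    exact tendstoUniformlyOn_empty
  have hg := boundedVariationOn_comp_clamp hT (hfv T).ne
  have hτ0 : ∀ n k, 0 ≤ τ n k := fun n k => h0 n ▸ hmono n k.zero_le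
  refine ((hg.tendstoUniformlyOn_sum_sq_increments (continuousWithinAt_Ici_comp_clamp hrc)
    h0 hmono htop hmesh T).congr
    (Eventually.of_forall fun n t ht => tsum_congr fun k => ?_)).congr_right
    fun t ht => tsum_sq_jump_comp_clamp hT (hfv T).ne ht.2
  have hmem : ∀ k, min (τ n k) t ∈ Icc 0 T := fun k =>
    ⟨le_min (hτ0 n k) ht.1, (min_le_right _ _).trans ht.2⟩
  simp only [max_zero_min_of_mem_Icc (hmem _)]

theorem continuousWithinAt_tsum_sq_jump {f : ℝ → ℝ}
    (hrc : ∀ t, ContinuousWithinAt f (Ici t) t) (hfv : ∀ T, eVariationOn f (Icc 0 T) < ⊤)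
    {t₀ : ℝ} (ht₀ : 0 ≤ t₀) :
    ContinuousWithinAt (fun t => ∑' x : Ioc 0 t, jump f x ^ 2) (Ici t₀) t₀ := by
  have hT : 0 ≤ t₀ + 1 := by linarith
  have hg := boundedVariationOn_comp_clamp hT (hfv (t₀ + 1)).ne
  refine (hg.continuousWithinAt_tsum_sq_jump (continuousWithinAt_Ici_comp_clamp hrc)
    ht₀).congr_of_eventuallyEq ?_ (tsum_sq_jump_comp_clamp hT (hfv _).ne (by linarith)).symm
  filter_upwards [mem_nhdsWithin_of_mem_nhds (Iic_mem_nhds (lt_add_one t₀))] with t ht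
  exact (tsum_sq_jump_comp_clamp hT (hfv _).ne ht).symm

theorem tendsto_ceil_mul_two_pow_div (x : ℝ) :
    Tendsto (fun j : ℕ => (⌈x * 2 ^ j⌉ : ℝ) / 2 ^ j) atTop (𝓝[≥] x) := by
  have hge : ∀ j : ℕ, x ≤ (⌈x * 2 ^ j⌉ : ℝ) / 2 ^ j := fun j => by
    rw [le_div_iff₀ (by positivity)]
    exact Int.le_ceil _
  have hle : ∀ j : ℕ, (⌈x * 2 ^ j⌉ : ℝ) / 2 ^ j ≤ x + (1 / 2) ^ j := fun j => by
    rw [div_le_iff₀ (by positivity), add_mul, ← mul_pow, one_div, inv_mul_cancel₀ two_ne_zero,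
      one_pow]
    exact (Int.ceil_lt_add_one _).le
  have hup : Tendsto (fun j : ℕ => x + (1 / 2 : ℝ) ^ j) atTop (𝓝 x) := by
    simpa using tendsto_const_nhds.add (tendsto_pow_atTop_nhds_zero_of_lt_one (by norm_num)
      (by norm_num : (1 / 2 : ℝ) < 1))
  exact tendsto_nhdsWithin_iff.2 ⟨tendsto_of_tendsto_of_tendsto_of_le_of_le tendsto_const_nhds
    hup hge hle, Eventually.of_forall hge⟩

section Measurability

variable {Ω : Type*} [MeasurableSpace Ω] {X : ℝ → Ω → ℝ}

/-- Approximate the random time from above by dyadic times. -/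
theorem measurable_eval_of_continuousWithinAt_Ici (hX : ∀ t, Measurable (X t))
    (hrc : ∀ ω t, ContinuousWithinAt (fun s => X s ω) (Ici t) t) {σ : Ω → ℝ}
    (hσ : Measurable σ) : Measurable fun ω => X (σ ω) ω := by
  refine measurable_of_tendsto_metrizable (f := fun j ω => X ((⌈σ ω * 2 ^ j⌉ : ℝ) / 2 ^ j) ω)
    (fun j => ?_) (tendsto_pi_nhds.2 fun ω => (hrc ω (σ ω)).tendsto.comp
      (tendsto_ceil_mul_two_pow_div (σ ω)))
  have hdyadic : Measurable fun p : Ω × ℤ => X ((p.2 : ℝ) / 2 ^ j) p.1 :=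
    measurable_from_prod_countable_left fun m => hX ((m : ℝ) / 2 ^ j)
  exact hdyadic.comp (measurable_id.prodMk (hσ.mul_const _).ceil)

theorem measurable_tsum_sq_increments (hX : ∀ t, Measurable (X t))
    (hrc : ∀ ω t, ContinuousWithinAt (fun s => X s ω) (Ici t) t) {σ : ℕ → Ω → ℝ}
    (hσ : ∀ k, Measurable (σ k)) (hmono : ∀ ω, Monotone (σ · ω))
    (htop : ∀ ω, Tendsto (σ · ω) atTop atTop) (t : ℝ) :
    Measurable fun ω => ∑' k, (X (min (σ (k + 1) ω) t) ω - X (min (σ k ω) t) ω) ^ 2 := by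
  have hterm : ∀ k, Measurable fun ω => X (min (σ k ω) t) ω := fun k =>
    measurable_eval_of_continuousWithinAt_Ici hX hrc ((hσ k).min measurable_const)
  refine measurable_of_tendsto_metrizable (fun K => Finset.measurable_sum (Finset.range K)
    fun k _ => ((hterm (k + 1)).sub (hterm k)).pow_const 2) (tendsto_pi_nhds.2 fun ω => ?_)
  obtain ⟨K, hK⟩ := ((htop ω).eventually_ge_atTop t).exists
  exact (hasSum_sq_increments (X · ω) (hmono ω) hK).summable.hasSum.tendsto_sum_nat

end Measurability

theorem tendsto_measure_of_eventually_notMem {Ω : Type*} [MeasurableSpace Ω] {μ : Measure Ω}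
    [IsFiniteMeasure μ] {S : ℕ → Set Ω} (hS : ∀ n, MeasurableSet (S n))
    (h : ∀ ω, ∀ᶠ n in atTop, ω ∉ S n) : Tendsto (fun n => μ (S n)) atTop (𝓝 0) := by
  have hU := tendsto_measure_iInter_atTop (μ := μ) (s := fun n => ⋃ m ≥ n, S m)
    (fun n => (MeasurableSet.biUnion (to_countable _) fun m _ => hS m).nullMeasurableSet)
    (fun _ _ hij => biUnion_subset_biUnion_left fun _ hm => le_trans hij hm)
    ⟨0, measure_ne_top _ _⟩
  have hempty : ⋂ n, ⋃ m ≥ n, S m = ∅ := eq_empty_of_forall_notMem fun ω hω => by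
    obtain ⟨N, hN⟩ := (h ω).exists_forall_of_atTop
    obtain ⟨m, hm, hmem⟩ := mem_iUnion₂.1 (mem_iInter.1 hω N)
    exact hN m hm hmem
  rw [hempty, measure_empty] at hU
  exact tendsto_of_tendsto_of_tendsto_of_le_of_le tendsto_const_nhds hU (fun _ => zero_le)
    fun n => measure_mono (subset_biUnion_of_mem (u := S) (le_refl n))

theorem tendstoUcp_of_tendstoUniformlyOn {Ω : Type*} {m0 : MeasurableSpace Ω} (μ : Measure Ω)
    [IsFiniteMeasure μ] {F : ℕ → ℝ → Ω → ℝ} {G : ℝ → Ω → ℝ} (hF : ∀ n t, Measurable (F n t))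
    (hrc : ∀ n ω t, 0 ≤ t → ContinuousWithinAt (fun s => F n s ω - G s ω) (Ici t) t)
    (hunif : ∀ ω T, TendstoUniformlyOn (fun n t => F n t ω) (fun t => G t ω) atTop (Icc 0 T)) :
    TendstoUcp μ F G := by
  intro T hT ε hε
  have hG : ∀ t ∈ Icc 0 T, Measurable (G t) := fun t ht =>
    measurable_of_tendsto_metrizable (hF · t) (tendsto_pi_nhds.2 fun ω => (hunif ω T).tendsto_at ht)
  set D : Set ℝ := insert T (((↑) : ℚ → ℝ) '' {q | (q : ℝ) ∈ Icc 0 T})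
  have hDT : D ⊆ Icc 0 T := insert_subset ⟨hT.le, le_rfl⟩ (image_subset_iff.2 fun _ hq => hq)
  set S : ℕ → Set Ω := fun n => ⋃ q ∈ D, {ω | ε / 2 ≤ |F n q ω - G q ω|}
  have hS : ∀ n, MeasurableSet (S n) := fun n =>
    MeasurableSet.biUnion (((to_countable _).image _).insert T) fun q hq =>
      measurableSet_le measurable_const ((hF n q).sub (hG q (hDT hq))).abs
  have hnotMem : ∀ ω, ∀ᶠ n in atTop, ω ∉ S n := fun ω => by
    filter_upwards [Metric.tendstoUniformlyOn_iff.1 (hunif ω T) (ε / 2) (half_pos hε)] with n hn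
    simp only [S, mem_iUnion, mem_ofPred_eq, not_exists, not_le]
    intro q hq
    simpa [Real.dist_eq, abs_sub_comm] using hn q (hDT hq)
  have hsub : ∀ n, {ω | ∃ t ∈ Icc 0 T, ε ≤ |F n t ω - G t ω|} ⊆ S n := by
    rintro n ω ⟨t, ht, hle⟩
    rcases ht.2.eq_or_lt with rfl | htT
    · exact mem_biUnion (mem_insert _ _) (show ε / 2 ≤ _ by linarith)
    have hev : ∀ᶠ s in 𝓝[≥] t, ε / 2 < |F n s ω - G s ω| ∧ s < T :=
      ((hrc n ω t ht.1).abs.eventually (lt_mem_nhds (by linarith))).and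
        (mem_nhdsWithin_of_mem_nhds (Iio_mem_nhds htT))
    obtain ⟨u, hu, hIco⟩ := mem_nhdsGE_iff_exists_Ico_subset.1 hev
    obtain ⟨q, htq, hqu⟩ := exists_rat_btwn (mem_Ioi.1 hu)
    have hq := hIco ⟨htq.le, hqu⟩
    exact mem_biUnion (mem_insert_of_mem _ ⟨q, ⟨ht.1.trans htq.le, hq.2.le⟩, rfl⟩) hq.1.le
  exact tendsto_of_tendsto_of_tendsto_of_le_of_le tendsto_const_nhds
    (tendsto_measure_of_eventually_notMem hS hnotMem) (fun _ => zero_le)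
    fun n => measure_mono (hsub n)

/-- every càdlàg adapted process of locally finite variation has zero
continuous quadratic variation: its quadratic variation exists as the ucp limit of
partition sums and equals the sum of squared jumps. -/
theorem stmt7 {Ω : Type*} {m0 : MeasurableSpace Ω} (μ : Measure Ω) [IsProbabilityMeasure μ]
    (ℱ : Filtration ℝ m0) (V : ℝ → Ω → ℝ)
    (hV : Cadlag V) (hVa : Adapted ℱ V) (hVv : LocFV V) :
    HasQV μ ℱ V (jumpCov V V) := by
  intro P hP hmesh
  have hrc : ∀ ω t, ContinuousWithinAt (fun s => V s ω) (Ici t) t := fun ω => (hV ω).1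
  have hVm : ∀ t, Measurable (V t) := fun t => (hVa t).mono (ℱ.le t) le_rfl
  have hPm : ∀ n k, Measurable (P n k) := fun n k => by
    simpa using ((hP n).2.2.2 k).measurable'.untopD 0
  have hPmono : ∀ n ω, Monotone (P n · ω) := fun n ω =>
    monotone_nat_of_le_succ fun k => (hP n).2.1 k ω
  have hcov : (fun n t ω => covApprox (P n) V V t ω) = fun n t ω =>
      ∑' k, (V (min (P n (k + 1) ω) t) ω - V (min (P n k ω) t) ω) ^ 2 := by
    simp only [covApprox, sq]
  have hjump : jumpCov V V = fun t ω => ∑' x : Ioc 0 t, jump (V · ω) x ^ 2 := by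
    funext t ω
    simp only [jumpCov, sq]
  rw [hcov, hjump]
  exact tendstoUcp_of_tendstoUniformlyOn μ
    (fun n => measurable_tsum_sq_increments hVm hrc (hPm n) (hPmono n) fun ω => (hP n).2.2.1 ω)
    (fun n ω t ht => (continuousWithinAt_tsum_sq_increments (hrc ω) (hPmono n ω)
      ((hP n).2.2.1 ω) t).sub (continuousWithinAt_tsum_sq_jump (hrc ω) (hVv ω) ht))
    fun ω => tendstoUniformlyOn_sum_sq_increments (hrc ω) (hVv ω) (fun n => (hP n).1 ω)
      (fun n => hPmono n ω) (fun n => (hP n).2.2.1 ω)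
      fun ε hε => (hmesh ε hε).imp fun N hN n hn k => hN n hn k ω
end
end

section
/- Pointwise integration by parts identity for jumps: let f : ℝ_+ × ℝ → ℝ be Lipschitz in x and càdlàg in t, with left and right x-derivatives existing everywhere, let f^-(t,x) = f(t−,x), Δ_t f = f − f^-, Y_t = f(t, X_t), ΔY_t = Y_t − f^-(t, X_{t−}). Then for each t, ∫_{X_{t−}}^{X_t} (f(t,x) − Y_t) f^-_{,2}(t,x) dx + (1/2)(ΔY_t)² = ∫_ℝ (f_{,2}(t,x) 1_{x < X_t} − f^-_{,2}(t,x) 1_{x < X_{t−}}) Δ_t f(t,x) dx, whenever f has compact support in x. -/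
open MeasureTheory Filter Set Function Topology

noncomputable section

open GBE MeasureTheory Set Filter Function

/-!
With `g = f(t,·)` and `h = f(t-,·)`, both Lipschitz (a pointwise limit of `L`-Lipschitz functions
is `L`-Lipschitz) and vanishing left of some `c ≤ min a b`, both sides of the identity reduce by
integration by parts on intervals starting at `c` to
`g(b)²/2 - g(b) h(b) + h(a)²/2 + ∫_a^b g h'`.
-/

theorem lipschitzWith_leftLim {α X Y : Type*} [LinearOrder α] [TopologicalSpace α]
    [OrderTopology α] [PseudoEMetricSpace X] [EMetricSpace Y] {F : α → X → Y} {K : NNReal}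
    {t : α} [(𝓝[<] t).NeBot] (hF : ∀ s, LipschitzWith K (F s))
    (hlim : ∀ x, ∃ l, Tendsto (fun s => F s x) (𝓝[<] t) (𝓝 l)) :
    LipschitzWith K (fun x => leftLim (fun s => F s x) t) := by
  refine (isClosed_setOfPred_lipschitzWith K).mem_of_tendsto (f := F) (b := 𝓝[<] t) ?_
    (Eventually.of_forall hF)
  refine tendsto_pi_nhds.2 fun x => ?_
  obtain ⟨l, hl⟩ := hlim x
  rwa [leftLim_eq_of_tendsto hl]

theorem AbsolutelyContinuousOnInterval.integral_deriv_mul_self {g : ℝ → ℝ} {a b : ℝ}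
    (hg : AbsolutelyContinuousOnInterval g a b) :
    ∫ x in a..b, deriv g x * g x = (g b ^ 2 - g a ^ 2) / 2 := by
  have hprod := hg.integral_deriv_mul_eq_sub hg
  have hsymm : ∫ x in a..b, (deriv g x * g x + g x * deriv g x)
      = 2 * ∫ x in a..b, deriv g x * g x := by
    rw [← intervalIntegral.integral_const_mul]
    exact intervalIntegral.integral_congr fun x _ => by ring
  linear_combination (hprod - hsymm) / 2

section JumpIdentity

variable {g h : ℝ → ℝ} {a b c : ℝ}

theorem intervalIntegral_jump_identity (hg : ∀ x y, AbsolutelyContinuousOnInterval g x y)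
    (hh : ∀ x y, AbsolutelyContinuousOnInterval h x y) (hgc : g c = 0) (hhc : h c = 0) :
    (∫ x in a..b, (g x - g b) * deriv h x) + 1 / 2 * (g b - h a) ^ 2
      = (∫ x in c..b, deriv g x * (g x - h x)) - ∫ x in c..a, deriv h x * (g x - h x) := by
  have hint : ∀ {u v : ℝ → ℝ}, (∀ x y, AbsolutelyContinuousOnInterval u x y) →
      (∀ x y, AbsolutelyContinuousOnInterval v x y) →
      ∀ x y, IntervalIntegrable (fun z => deriv u z * v z) volume x y :=
    fun hu hv x y => (hu x y).intervalIntegrable_deriv.mul_continuousOn (hv x y).continuousOn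
  have hlhs : ∫ x in a..b, (g x - g b) * deriv h x
      = (∫ x in a..b, deriv h x * g x) - g b * (h b - h a) := by
    rw [← (hh a b).integral_deriv_eq_sub, ← intervalIntegral.integral_const_mul,
      ← intervalIntegral.integral_sub (hint hh hg a b)
        ((hh a b).intervalIntegrable_deriv.const_mul _)]
    exact intervalIntegral.integral_congr fun x _ => by ring
  have hsplit : ∀ {u : ℝ → ℝ}, (∀ x y, AbsolutelyContinuousOnInterval u x y) → ∀ y,
      ∫ x in c..y, deriv u x * (g x - h x)
        = (∫ x in c..y, deriv u x * g x) - ∫ x in c..y, deriv u x * h x := fun hu y => by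
    rw [← intervalIntegral.integral_sub (hint hu hg c y) (hint hu hh c y)]
    exact intervalIntegral.integral_congr fun x _ => by ring
  have hparts : (∫ x in c..b, deriv g x * h x) + ∫ x in c..b, deriv h x * g x = g b * h b := by
    have hprod := (hg c b).integral_deriv_mul_eq_sub (hh c b)
    rw [hgc, zero_mul, sub_zero] at hprod
    rw [← hprod, ← intervalIntegral.integral_add (hint hg hh c b) (hint hh hg c b)]
    exact intervalIntegral.integral_congr fun x _ => by ring
  have hadd := intervalIntegral.integral_add_adjacent_intervals (hint hh hg c a) (hint hh hg a b)
  rw [hlhs, hsplit hg, hsplit hh, (hg c b).integral_deriv_mul_self,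
    (hh c a).integral_deriv_mul_self, hgc, hhc]
  linear_combination hadd + hparts

theorem ite_lt_mul_eq_indicator {φ ψ : ℝ → ℝ} (hψ : ∀ x ≤ c, ψ x = 0) (x : ℝ) :
    (if x < b then φ x else 0) * ψ x = (Ioo c b).indicator (fun y => φ y * ψ y) x := by
  rcases le_or_gt x c with hxc | hcx
  · simp [indicator_apply, hψ x hxc]
  · by_cases hxb : x < b <;> simp [hcx, hxb]

theorem integrable_indicator_Ioo {φ : ℝ → ℝ} (hcb : c ≤ b)
    (hφ : IntervalIntegrable φ volume c b) :
    Integrable ((Ioo c b).indicator φ) :=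
  (integrable_indicator_iff measurableSet_Ioo).2
    (((intervalIntegrable_iff_integrableOn_Ioc_of_le hcb).1 hφ).mono_set Ioo_subset_Ioc_self)

theorem integral_indicator_Ioo {φ : ℝ → ℝ} (hcb : c ≤ b) :
    ∫ x, (Ioo c b).indicator φ x = ∫ x in c..b, φ x := by
  rw [MeasureTheory.integral_indicator measurableSet_Ioo, intervalIntegral.integral_of_le hcb,
    integral_Ioc_eq_integral_Ioo]

theorem integral_jump_identity (hg : ∀ x y, AbsolutelyContinuousOnInterval g x y)
    (hh : ∀ x y, AbsolutelyContinuousOnInterval h x y) (hca : c ≤ a) (hcb : c ≤ b)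
    (hg0 : ∀ x ≤ c, g x = 0) (hh0 : ∀ x ≤ c, h x = 0) :
    (∫ x in a..b, (g x - g b) * deriv h x) + 1 / 2 * (g b - h a) ^ 2
      = ∫ x, ((if x < b then deriv g x else 0) - (if x < a then deriv h x else 0))
          * (g x - h x) := by
  have hdiff : ∀ x ≤ c, g x - h x = 0 := fun x hx => by rw [hg0 x hx, hh0 x hx, sub_zero]
  have hint : ∀ {u : ℝ → ℝ}, (∀ x y, AbsolutelyContinuousOnInterval u x y) → ∀ y,
      IntervalIntegrable (fun x => deriv u x * (g x - h x)) volume c y := fun hu y =>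
    (hu c y).intervalIntegrable_deriv.mul_continuousOn ((hg c y).sub (hh c y)).continuousOn
  simp_rw [sub_mul (ite _ _ _), ite_lt_mul_eq_indicator hdiff]
  rw [MeasureTheory.integral_sub (integrable_indicator_Ioo hcb (hint hg b))
      (integrable_indicator_Ioo hca (hint hh a)),
    integral_indicator_Ioo hcb, integral_indicator_Ioo hca]
  exact intervalIntegral_jump_identity hg hh (hg0 c le_rfl) (hh0 c le_rfl)

theorem integral_jump_identity_of_ae_hasDerivAt {g' h' : ℝ → ℝ}
    (hg : ∀ x y, AbsolutelyContinuousOnInterval g x y)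
    (hh : ∀ x y, AbsolutelyContinuousOnInterval h x y) (hca : c ≤ a) (hcb : c ≤ b)
    (hg0 : ∀ x ≤ c, g x = 0) (hh0 : ∀ x ≤ c, h x = 0)
    (hg' : ∀ᵐ x, HasDerivAt g (g' x) x) (hh' : ∀ᵐ x, HasDerivAt h (h' x) x) :
    (∫ x in a..b, (g x - g b) * h' x) + 1 / 2 * (g b - h a) ^ 2
      = ∫ x, ((if x < b then g' x else 0) - (if x < a then h' x else 0)) * (g x - h x) := by
  have hderiv_g : ∀ᵐ x, deriv g x = g' x := hg'.mono fun x hx => hx.deriv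
  have hderiv_h : ∀ᵐ x, deriv h x = h' x := hh'.mono fun x hx => hx.deriv
  convert integral_jump_identity hg hh hca hcb hg0 hh0 using 1
  · congr 1
    refine intervalIntegral.integral_congr_ae ?_
    filter_upwards [hderiv_h] with x hx _
    rw [hx]
  · refine MeasureTheory.integral_congr_ae ?_
    filter_upwards [hderiv_g, hderiv_h] with x hxg hxh
    rw [hxg, hxh]

end JumpIdentity

theorem stmt16_general (f f₂ f₂m : ℝ → ℝ → ℝ)
    (hLip : ∃ L, ∀ t, LipschitzWith L (fun x => f t x))
    (hcad : ∀ x, CadlagOn (fun t => f t x))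
    (hsupp : ∃ K : ℝ, ∀ t x : ℝ, K ≤ |x| → f t x = 0)
    (hf₂ : ∀ t, ∀ᵐ x : ℝ, HasDerivAt (fun y => f t y) (f₂ t x) x)
    (hf₂m : ∀ t, ∀ᵐ x : ℝ,
      HasDerivAt (fun y => Function.leftLim (fun s => f s y) t) (f₂m t x) x)
    (t a b : ℝ) :
    (∫ x in a..b, (f t x - f t b) * f₂m t x)
        + (1/2) * (f t b - Function.leftLim (fun s => f s a) t)^2
      = ∫ x : ℝ, ((if x < b then f₂ t x else 0) - (if x < a then f₂m t x else 0))
          * (f t x - Function.leftLim (fun s => f s x) t) := by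
  obtain ⟨L, hL⟩ := hLip
  obtain ⟨K, hK⟩ := hsupp
  have hL_leftLim : LipschitzWith L (fun x => leftLim (fun s => f s x) t) :=
    lipschitzWith_leftLim hL fun x => (hcad x).2 t
  set c := -(|K| + |a| + |b|)
  have hvanish : ∀ x ≤ c, ∀ s, f s x = 0 := fun x hx s =>
    hK s x (by linarith [le_abs_self K, neg_le_abs x, abs_nonneg a, abs_nonneg b])
  refine integral_jump_identity_of_ae_hasDerivAt
    (fun _ _ => (hL t).lipschitzOnWith.absolutelyContinuousOnInterval)
    (fun _ _ => hL_leftLim.lipschitzOnWith.absolutelyContinuousOnInterval)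
    (by linarith [neg_abs_le a, abs_nonneg K, abs_nonneg b])
    (by linarith [neg_abs_le b, abs_nonneg K, abs_nonneg a])
    (fun x hx => hvanish x hx t) (fun x hx => ?_) (hf₂ t) (hf₂m t)
  rw [show (fun s => f s x) = fun _ => 0 from funext (hvanish x hx)]
  exact leftLim_eq_of_tendsto tendsto_const_nhds

/-- pointwise integration by parts identity for jumps (identity (6.6)
of the paper). With `a = X_{t-}`, `b = X_t`, `f⁻(t,x) = f(t-,x)`,
`f₂, f₂⁻` the a.e. `x`-derivatives of `f(t,·)` and `f⁻(t,·)`: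
`∫_a^b (f(t,x) − f(t,b)) f₂⁻(t,x) dx + ½ (f(t,b) − f⁻(t,a))²
  = ∫_ℝ (f₂(t,x) 1_{x<b} − f₂⁻(t,x) 1_{x<a}) (f(t,x) − f⁻(t,x)) dx`. -/
theorem stmt16 (f f₂ f₂m : ℝ → ℝ → ℝ)
    (hLip : ∃ L, ∀ t, LipschitzWith L (fun x => f t x))
    (hcad : ∀ x, CadlagOn (fun t => f t x))
    (hder : ∀ t x, ∃ dl dr : ℝ,
      HasDerivWithinAt (fun y => f t y) dl (Iio x) x ∧
      HasDerivWithinAt (fun y => f t y) dr (Ioi x) x)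
    (hsupp : ∃ K : ℝ, ∀ t x : ℝ, K ≤ |x| → f t x = 0)
    (hf₂ : ∀ t, ∀ᵐ x : ℝ, HasDerivAt (fun y => f t y) (f₂ t x) x)
    (hf₂m : ∀ t, ∀ᵐ x : ℝ,
      HasDerivAt (fun y => Function.leftLim (fun s => f s y) t) (f₂m t x) x)
    (t a b : ℝ) (ht : 0 < t) :
    (∫ x in a..b, (f t x - f t b) * f₂m t x)
        + (1/2) * (f t b - Function.leftLim (fun s => f s a) t)^2
      = ∫ x : ℝ, ((if x < b then f₂ t x else 0) - (if x < a then f₂m t x else 0))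
          * (f t x - Function.leftLim (fun s => f s x) t) :=
  stmt16_general f f₂ f₂m hLip hcad hsupp hf₂ hf₂m t a b
end
end

section
/- Let Y be a càdlàg process and V = Σ_n 1_{[σ_n, τ_n)} a {0,1}-valued pure jump process with σ_n ≤ τ_n ≤ σ_{n+1} stopping times increasing to infinity, such that V_t Y_t = 0 for all t. Then the pathwise/Dirichlet integral satisfies ∫_0^t V_{s−} dY_s = Σ_{s ≤ t} V_{s−} Y_s, where the integral is defined by integration by parts ∫_0^t V_{s−} dY_s = V_t Y_t − V_0 Y_0 − ∫_0^t Y_{s−} dV_s − [V, Y]_t. -/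
open MeasureTheory Filter Set Function Topology

noncomputable section

open GBE MeasureTheory Set Filter Function

/-!
Since `V Y = 0`, at every time `s` we have `V_{s-} Y_s = -Y_{s-} ΔV_s - ΔV_s ΔY_s`, which is the
integration-by-parts formula read off jump by jump. On `[0, t]` the path of `V` only jumps at
the finitely many `σ_n, τ_n ≤ t`, so all the sums are finite and can be split term by term.
-/

section StepFunction

variable {α : Type*} [LinearOrder α] [TopologicalSpace α] [OrderTopology α]

theorem eventually_le_iff_of_ne {a s : α} (h : s ≠ a) : ∀ᶠ u in 𝓝 s, (a ≤ u ↔ a ≤ s) := by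
  rcases h.lt_or_gt with h | h
  · filter_upwards [eventually_lt_nhds h] with u hu
    simp [hu.not_ge, h.not_ge]
  · filter_upwards [eventually_gt_nhds h] with u hu
    simp [hu.le, h.le]

theorem eventually_mem_Ico_iff_of_ne {a b s : α} (ha : s ≠ a) (hb : s ≠ b) :
    ∀ᶠ u in 𝓝 s, (a ≤ u ∧ u < b ↔ a ≤ s ∧ s < b) := by
  filter_upwards [eventually_le_iff_of_ne ha, eventually_le_iff_of_ne hb] with u hua hub
  simp only [← not_le, hua, hub]

theorem continuousAt_sum_ite_Ico {ι : Type*} (T : Finset ι) (a b : ι → α) {s : α}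
    (ha : ∀ n ∈ T, s ≠ a n) (hb : ∀ n ∈ T, s ≠ b n) :
    ContinuousAt (fun u => ∑ n ∈ T, if a n ≤ u ∧ u < b n then (1:ℝ) else 0) s := by
  refine (continuousAt_const :
    ContinuousAt (fun _ => ∑ n ∈ T, if a n ≤ s ∧ s < b n then (1:ℝ) else 0) s).congr ?_
  filter_upwards [(eventually_all_finset T).2 fun n hn =>
    eventually_mem_Ico_iff_of_ne (ha n hn) (hb n hn)] with u hu
  exact Finset.sum_congr rfl fun n hn => by simp only [hu n hn]

end StepFunction

theorem jump_eq_zero_of_continuousWithinAt {f : ℝ → ℝ} {s : ℝ}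
    (hf : ContinuousWithinAt f (Iic s) s) : jump f s = 0 := by
  rw [jump, hf.leftLim_eq, sub_self]

theorem tsum_ite_Ico_eq_sum {a b : ℕ → ℝ} {N : ℕ} {u : ℝ} (hN : ∀ n ≥ N, u < a n) :
    ∑' n, (if a n ≤ u ∧ u < b n then (1:ℝ) else 0)
      = ∑ n ∈ Finset.range N, if a n ≤ u ∧ u < b n then (1:ℝ) else 0 :=
  tsum_eq_sum fun n hn => if_neg fun h => (hN n (by simpa using hn)).not_ge h.1

theorem finite_jump_ne_zero_of_eq_tsum_ite_Ico {f : ℝ → ℝ} {a b : ℕ → ℝ}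
    (hf : ∀ u, f u = ∑' n, if a n ≤ u ∧ u < b n then (1:ℝ) else 0)
    (ha : Tendsto a atTop atTop) (t : ℝ) : {s | s ≤ t ∧ jump f s ≠ 0}.Finite := by
  obtain ⟨N, hN⟩ := eventually_atTop.1 (ha.eventually (eventually_gt_atTop t))
  refine (((Finset.range N).finite_toSet.image a).union
    ((Finset.range N).finite_toSet.image b)).subset ?_
  rintro s ⟨hst, hjump⟩
  by_contra hS
  simp only [mem_union, mem_image, Finset.mem_coe, not_or, not_exists, not_and] at hS
  refine hjump (jump_eq_zero_of_continuousWithinAt ?_)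
  have hstep := continuousAt_sum_ite_Ico (Finset.range N) a b
    (fun n hn h => hS.1 n hn h.symm) (fun n hn h => hS.2 n hn h.symm)
  refine hstep.continuousWithinAt.congr (fun u hu => ?_) ?_
  · rw [hf, tsum_ite_Ico_eq_sum fun n hn => (le_trans hu hst).trans_lt (hN n hn)]
  · rw [hf, tsum_ite_Ico_eq_sum fun n hn => hst.trans_lt (hN n hn)]

theorem leftLim_mul_eq_of_mul_eq_zero {v y : ℝ → ℝ} {s : ℝ} (h : v s * y s = 0) :
    leftLim v s * y s = -(leftLim y s * jump v s) - jump v s * jump y s := by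
  simp only [jump]
  linear_combination h

theorem tsum_leftLim_mul_eq_of_mul_eq_zero {v y : ℝ → ℝ} {A : Set ℝ}
    (hfin : {s ∈ A | jump v s ≠ 0}.Finite) (hvy : ∀ s ∈ A, v s * y s = 0) :
    ∑' s : A, leftLim v s * y s
      = -(∑' s : A, leftLim y s * jump v s) - ∑' s : A, jump v s * jump y s := by
  have hsummable : ∀ g : ℝ → ℝ, Summable fun s : A => g s * jump v s := fun g =>
    summable_of_hasFiniteSupport <| (hfin.preimage Subtype.val_injective.injOn).subset
      fun s hs => ⟨s.2, right_ne_zero_of_mul hs⟩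
  have hsummable' : Summable fun s : A => jump v s * jump y s := by
    simpa only [mul_comm] using hsummable (jump y)
  rw [← tsum_neg, ← (hsummable _).neg.tsum_sub hsummable']
  exact tsum_congr fun s => leftLim_mul_eq_of_mul_eq_zero (hvy s s.2)

theorem stmt18_general {Ω : Type*}
    (Y V : ℝ → Ω → ℝ) (σ τ : ℕ → Ω → ℝ)
    (hlim : ∀ ω, Tendsto (fun n => σ n ω) atTop atTop)
    (hV : ∀ t ω, V t ω = ∑' n : ℕ, (if σ n ω ≤ t ∧ t < τ n ω then (1:ℝ) else 0))
    (hVY : ∀ t ω, V t ω * Y t ω = 0)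
    (I : ℝ → Ω → ℝ)
    (hI : ∀ t ω, I t ω = V t ω * Y t ω - V 0 ω * Y 0 ω
      - (∑' s : Ioc (0:ℝ) t,
          Function.leftLim (fun u => Y u ω) s * jump (fun u => V u ω) s)
      - jumpCov V Y t ω) :
    ∀ t ω, I t ω
      = ∑' s : Ioc (0:ℝ) t, Function.leftLim (fun u => V u ω) s * Y (s : ℝ) ω := by
  intro t ω
  have hfin : {s ∈ Ioc 0 t | jump (fun u => V u ω) s ≠ 0}.Finite :=
    (finite_jump_ne_zero_of_eq_tsum_ite_Ico (hV · ω) (hlim ω) t).subset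
      fun s hs => ⟨hs.1.2, hs.2⟩
  rw [hI, hVY, hVY, jumpCov,
    tsum_leftLim_mul_eq_of_mul_eq_zero hfin fun s _ => hVY s ω]
  ring

/-- if `V = Σ_n 1_{[σ_n, τ_n)}` is a `{0,1}`-valued pure jump process
with stopping times `σ_n ≤ τ_n ≤ σ_{n+1}` increasing to infinity and `V Y = 0`, then
the integral `∫_0^t V_{s-} dY_s`, defined by integration by parts
`I_t = V_t Y_t − V_0 Y_0 − ∫_0^t Y_{s-} dV_s − [V,Y]_t` (the Stieltjes integral
against the pure jump `V` being the jump sum), equals `Σ_{s ≤ t} V_{s-} Y_s`. -/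
theorem stmt18 {Ω : Type*} {m0 : MeasurableSpace Ω} (μ : Measure Ω) [IsProbabilityMeasure μ]
    (ℱ : Filtration ℝ m0) (Y V : ℝ → Ω → ℝ) (σ τ : ℕ → Ω → ℝ)
    (hY : Cadlag Y)
    (hst : ∀ n, IsStoppingTime ℱ (fun ω => ((σ n ω : ℝ) : WithTop ℝ)) ∧
      IsStoppingTime ℱ (fun ω => ((τ n ω : ℝ) : WithTop ℝ)))
    (hord : ∀ n ω, σ n ω ≤ τ n ω ∧ τ n ω ≤ σ (n+1) ω)
    (hlim : ∀ ω, Tendsto (fun n => σ n ω) atTop atTop)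
    (hV : ∀ t ω, V t ω = ∑' n : ℕ, (if σ n ω ≤ t ∧ t < τ n ω then (1:ℝ) else 0))
    (hVY : ∀ t ω, V t ω * Y t ω = 0)
    (I : ℝ → Ω → ℝ)
    (hI : ∀ t ω, I t ω = V t ω * Y t ω - V 0 ω * Y 0 ω
      - (∑' s : Ioc (0:ℝ) t,
          Function.leftLim (fun u => Y u ω) s * jump (fun u => V u ω) s)
      - jumpCov V Y t ω) :
    ∀ t ω, I t ω
      = ∑' s : Ioc (0:ℝ) t, Function.leftLim (fun u => V u ω) s * Y (s : ℝ) ω :=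
  stmt18_general Y V σ τ hlim hV hVY I hI
end
end
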